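/- arXiv:2208.01975 — 10 statements merged into one kernel-verified Lean document; each statement's English description precedes it below -/
import Mathlib

section
/- In (n+1)-dimensional Minkowski space (n ≥ 1) with the canonical time function τ(p) = p₀, the null distance encodes causality: for all points p and q, d̂_τ(p,q) = τ(q) − τ(p) if and only if q is in the causal future of p, i.e. q₀ − p₀ ≥ ‖q̄ − p̄‖. -/
open scoped BigOperators

/-- A chain from `p` to `q`: a finite sequence `x 0 = p, x 1, …, x k = q` (`k ≥ 1`)
such that consecutive points are causally related in one direction or the other. -/
def IsCausalChain {X : Type*} (R : X → X → Prop) (k : ℕ) (x : ℕ → X) (p q : X) : Prop :=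
  1 ≤ k ∧ x 0 = p ∧ x k = q ∧ ∀ i < k, R (x i) (x (i + 1)) ∨ R (x (i + 1)) (x i)

/-- The null length of a chain. -/
noncomputable def nullLength {X : Type*} (τ : X → ℝ) (k : ℕ) (x : ℕ → X) : ℝ :=
  ∑ i ∈ Finset.range k, |τ (x (i + 1)) - τ (x i)|

/-- The null distance: the infimum (in `[0,∞]`, i.e. in `EReal`, of a set of
nonnegative values) of the null lengths of chains from `p` to `q`. -/
noncomputable def nullDist {X : Type*} (R : X → X → Prop) (τ : X → ℝ) (p q : X) : EReal :=
  sInf {L : EReal | ∃ k x, IsCausalChain R k x p q ∧ L = ((nullLength τ k x : ℝ) : EReal)}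

/-- Minkowski causal relation on `ℝ × ℝⁿ`: `q` is in the causal future of `p`
iff `q₀ - p₀ ≥ ‖q̄ - p̄‖`. -/
def minkCausal {n : ℕ} (p q : ℝ × EuclideanSpace ℝ (Fin n)) : Prop :=
  ‖q.2 - p.2‖ ≤ q.1 - p.1

/-- In (n+1)-dimensional Minkowski space (n ≥ 1) with the canonical time
function `τ(p) = p₀`, the null distance encodes causality:
`d̂_τ(p,q) = τ(q) − τ(p)` iff `q` is in the causal future of `p`. -/
theorem nullDist_encodes_causality_minkowski (n : ℕ) (hn : 1 ≤ n)
    (p q : ℝ × EuclideanSpace ℝ (Fin n)) :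
    nullDist minkCausal (fun x => x.1) p q = ((q.1 - p.1 : ℝ) : EReal) ↔ minkCausal p q := by
  have key : ∀ (k : ℕ) (x : ℕ → ℝ × EuclideanSpace ℝ (Fin n)),
      IsCausalChain minkCausal k x p q →
      |q.1 - p.1| ≤ nullLength (fun y => y.1) k x ∧
      ‖q.2 - p.2‖ ≤ nullLength (fun y => y.1) k x := by
    intro k x ⟨hk, h0, hkq, hstep⟩
    constructor
    · have htel : q.1 - p.1 = ∑ i ∈ Finset.range k, ((x (i + 1)).1 - (x i).1) := by
        rw [Finset.sum_range_sub (fun i => (x i).1), h0, hkq]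
      rw [htel]
      exact Finset.abs_sum_le_sum_abs _ _
    · have htel : q.2 - p.2 = ∑ i ∈ Finset.range k, ((x (i + 1)).2 - (x i).2) := by
        rw [Finset.sum_range_sub (fun i => (x i).2), h0, hkq]
      rw [htel]
      refine le_trans (norm_sum_le _ _) (Finset.sum_le_sum ?_)
      intro i hi
      rcases hstep i (Finset.mem_range.mp hi) with h | h
      · exact le_trans h (le_abs_self _)
      · calc ‖(x (i + 1)).2 - (x i).2‖ = ‖(x i).2 - (x (i + 1)).2‖ := norm_sub_rev _ _
          _ ≤ (x i).1 - (x (i + 1)).1 := h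
          _ ≤ |(x (i + 1)).1 - (x i).1| := by rw [abs_sub_comm]; exact le_abs_self _
  constructor
  · intro h
    have hlb : ((‖q.2 - p.2‖ : ℝ) : EReal) ≤
        nullDist minkCausal (fun x => x.1) p q := by
      apply le_sInf
      rintro L ⟨k, x, hc, rfl⟩
      exact_mod_cast (key k x hc).2
    rw [h] at hlb
    exact EReal.coe_le_coe_iff.mp hlb
  · intro h
    have hnn : (0 : ℝ) ≤ q.1 - p.1 := le_trans (norm_nonneg _) h
    apply le_antisymm
    · apply sInf_le
      refine ⟨1, fun i => if i = 0 then p else q, ⟨le_refl 1, rfl, rfl, ?_⟩, ?_⟩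
      · intro i hi
        interval_cases i
        left
        simpa using h
      · simp [nullLength, abs_of_nonneg hnn]
    · apply le_sInf
      rintro L ⟨k, x, hc, rfl⟩
      exact_mod_cast le_trans (le_abs_self _) (key k x hc).1
end

section
/- Existence of a minimizing curve (metric version of Lemma 4.3): Let (M, d) be a metric space and τ : M → ℝ a 1-Lipschitz function such that the preimage under τ of every compact interval is a compact subset of M. Suppose p, q ∈ M satisfy d(p,q) = τ(q) − τ(p), and suppose that for every j ∈ ℕ there is a continuous curve β_j : [0,1] → M with β_j(0) = p, β_j(1) = q whose d-rectifiable length is less than d(p,q) + 1/j. Then there exists a continuous curve C : [0,1] → M with C(0) = p, C(1) = q and d(C(s), C(s')) = τ(C(s')) − τ(C(s)) for all 0 ≤ s ≤ s' ≤ 1. -/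
/-!
Reparametrise each almost-minimizing curve `β_j` by the first time it reaches the level
`τ = t`, giving `γ_j t`. Since `τ` is 1-Lipschitz, the inscribed polygon `p, γ_j t, γ_j t', q`
has length at least `τ q - τ p = d(p, q)` and, by the variation bound, at most `d(p, q) + 1/j`.
The points `γ_j t` lie in the compact set `τ⁻¹[τ p, τ q]`, so they converge pointwise along an
ultrafilter (no equicontinuity is needed); in the limit `c` the polygon inequality becomes an
equality, which forces `d(c t, c t') = t' - t`. Hence `c` is an isometric embedding of
`[τ p, τ q]`, and its affine reparametrisation on `[0, 1]` is the required curve.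
-/

open Set Filter Topology

lemma LipschitzWith.sub_le_dist {M : Type*} [PseudoMetricSpace M] {τ : M → ℝ}
    (hτ : LipschitzWith 1 τ) (x y : M) : τ y - τ x ≤ dist x y := by
  have := hτ.le_add_mul y x
  rw [NNReal.coe_one, one_mul, dist_comm] at this
  linarith

lemma eVariationOn.edist_add_edist_add_edist_le {α E : Type*} [LinearOrder α]
    [PseudoEMetricSpace E] (f : α → E) {s : Set α} {a b c d : α} (ha : a ∈ s) (hb : b ∈ s)
    (hc : c ∈ s) (hd : d ∈ s) (hab : a ≤ b) (hbc : b ≤ c) (hcd : c ≤ d) :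
    edist (f a) (f b) + edist (f b) (f c) + edist (f c) (f d) ≤ eVariationOn f s := by
  have piece : ∀ {x y}, x ∈ s → y ∈ s → x ≤ y →
      edist (f x) (f y) ≤ eVariationOn f (s ∩ Icc x y) := fun hx hy hxy =>
    eVariationOn.edist_le f ⟨hx, le_rfl, hxy⟩ ⟨hy, hxy, le_rfl⟩
  calc edist (f a) (f b) + edist (f b) (f c) + edist (f c) (f d)
      ≤ eVariationOn f (s ∩ Icc a b) + eVariationOn f (s ∩ Icc b c)
          + eVariationOn f (s ∩ Icc c d) := by
        gcongr <;> exact piece ‹_› ‹_› ‹_›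
    _ = eVariationOn f (s ∩ Icc a d) := by
        rw [eVariationOn.Icc_add_Icc f hab hbc hb,
          eVariationOn.Icc_add_Icc f (hab.trans hbc) hcd hc]
    _ ≤ eVariationOn f s := eVariationOn.mono f inter_subset_left

-- The section is the first hitting time `t ↦ sInf ([a, b] ∩ f ⁻¹' {t})`.
lemma ContinuousOn.exists_monotoneOn_rightInvOn {f : ℝ → ℝ} {a b : ℝ} (hab : a ≤ b)
    (hf : ContinuousOn f (Icc a b)) :
    ∃ g : ℝ → ℝ, MonotoneOn g (Icc (f a) (f b)) ∧ MapsTo g (Icc (f a) (f b)) (Icc a b) ∧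
      RightInvOn g f (Icc (f a) (f b)) := by
  set hit : ℝ → Set ℝ := fun t => Icc a b ∩ f ⁻¹' {t}
  have hit_mem : ∀ t ∈ Icc (f a) (f b), sInf (hit t) ∈ hit t := fun t ht =>
    IsClosed.csInf_mem (hf.preimage_isClosed_of_isClosed isClosed_Icc isClosed_singleton)
      (intermediate_value_Icc hab hf ht) ⟨a, fun s hs => hs.1.1⟩
  refine ⟨fun t => sInf (hit t), ?_, fun t ht => (hit_mem t ht).1,
    fun t ht => (hit_mem t ht).2⟩
  intro t ht t' ht' htt'
  obtain ⟨⟨ha', hb'⟩, hft' : f (sInf (hit t')) = t'⟩ := hit_mem t' ht'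
  obtain ⟨s, hs, hfs⟩ := intermediate_value_Icc ha' (hf.mono (Icc_subset_Icc le_rfl hb'))
    (show t ∈ Icc (f a) (f (sInf (hit t'))) by rw [hft']; exact ⟨ht.1, htt'⟩)
  have hs_hit : s ∈ hit t := ⟨⟨hs.1, hs.2.trans hb'⟩, hfs⟩
  exact (csInf_le ⟨a, fun s hs => hs.1.1⟩ hs_hit).trans hs.2

lemma IsCompact.exists_forall_tendsto_ultrafilter {ι α X : Type*} [TopologicalSpace X]
    {K : Set X} (hK : IsCompact K) (F : Ultrafilter ι) {s : Set α} {γ : ι → α → X}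
    (hγ : ∀ i, MapsTo (γ i) s K) : ∃ c : α → X, ∀ t ∈ s, Tendsto (γ · t) F (𝓝 (c t)) := by
  have : ∀ t, ∃ x, t ∈ s → Tendsto (γ · t) F (𝓝 x) := fun t => by
    by_cases ht : t ∈ s
    · obtain ⟨x, -, hx⟩ :=
        hK.ultrafilter_le_nhds' (F.map (γ · t)) (Ultrafilter.mem_map.2 (univ_mem' (hγ · ht)))
      exact ⟨x, fun _ => hx⟩
    · obtain ⟨i⟩ := nonempty_of_neBot (F : Filter ι)
      exact ⟨γ i t, fun h => absurd h ht⟩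
  choose c hc using this
  exact ⟨c, hc⟩

section LevelCurve

variable {M : Type*} [PseudoMetricSpace M] {τ : M → ℝ} {p q : M}

/-- A length bound tested only on the inscribed polygons `p, γ t, γ t', q`: unlike the variation,
it passes to pointwise limits. -/
def IsLevelCurve (τ : M → ℝ) (p q : M) (L : ℝ) (γ : ℝ → M) : Prop :=
  ∀ t ∈ Icc (τ p) (τ q), τ (γ t) = t ∧ ∀ t' ∈ Icc (τ p) (τ q), t ≤ t' →
    dist p (γ t) + dist (γ t) (γ t') + dist (γ t') q ≤ L

lemma exists_isLevelCurve_of_eVariationOn_lt (hτ : Continuous τ) {β : ℝ → M} {a b L : ℝ}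
    (hab : a ≤ b) (hβ : ContinuousOn β (Icc a b))
    (hL : eVariationOn β (Icc a b) < ENNReal.ofReal L) :
    ∃ γ, IsLevelCurve τ (β a) (β b) L γ := by
  obtain ⟨g, hg_mono, hg_maps, hg_inv⟩ :=
    (hτ.comp_continuousOn hβ).exists_monotoneOn_rightInvOn hab
  refine ⟨β ∘ g, fun t ht => ⟨hg_inv ht, fun t' ht' htt' => ?_⟩⟩
  have hpoly := eVariationOn.edist_add_edist_add_edist_le β (left_mem_Icc.2 hab) (hg_maps ht)
    (hg_maps ht') (right_mem_Icc.2 hab) (hg_maps ht).1 (hg_mono ht ht' htt') (hg_maps ht').2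
  rw [edist_dist, edist_dist, edist_dist, ← ENNReal.ofReal_add dist_nonneg dist_nonneg,
    ← ENNReal.ofReal_add (by positivity) dist_nonneg] at hpoly
  exact ((ENNReal.ofReal_lt_ofReal_iff').1 (hpoly.trans_lt hL)).1.le

lemma exists_isLevelCurve_of_tendsto (hτ : Continuous τ)
    (hK : IsCompact (τ ⁻¹' Icc (τ p) (τ q))) {γ : ℕ → ℝ → M} {L : ℕ → ℝ} {ℓ : ℝ}
    (hγ : ∀ n, IsLevelCurve τ p q (L n) (γ n)) (hL : Tendsto L atTop (𝓝 ℓ)) :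
    ∃ c, IsLevelCurve τ p q ℓ c := by
  let F := Ultrafilter.of (atTop : Filter ℕ)
  obtain ⟨c, hc⟩ := hK.exists_forall_tendsto_ultrafilter F
    fun n t ht => show τ (γ n t) ∈ _ by rwa [(hγ n t ht).1]
  refine ⟨c, fun t ht => ⟨?_, fun t' ht' htt' => ?_⟩⟩
  · exact tendsto_nhds_unique ((hτ.tendsto _).comp (hc t ht))
      (tendsto_const_nhds.congr fun n => (hγ n t ht).1.symm)
  · exact le_of_tendsto_of_tendsto'
      (((tendsto_const_nhds.dist (hc t ht)).add ((hc t ht).dist (hc t' ht'))).add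
        ((hc t' ht').dist tendsto_const_nhds))
      (hL.mono_left (Ultrafilter.of_le _)) fun n => (hγ n t ht).2 t' ht' htt'

variable {c : ℝ → M}

lemma IsLevelCurve.dist_eq (hτ : LipschitzWith 1 τ) (hc : IsLevelCurve τ p q (τ q - τ p) c)
    {t t' : ℝ} (ht : t ∈ Icc (τ p) (τ q)) (ht' : t' ∈ Icc (τ p) (τ q)) (htt' : t ≤ t') :
    dist p (c t) = t - τ p ∧ dist (c t) (c t') = t' - t ∧ dist (c t') q = τ q - t' := by
  obtain ⟨hct, hpoly⟩ := hc t ht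
  have hct' := (hc t' ht').1
  have h₁ := hτ.sub_le_dist p (c t)
  have h₂ := hτ.sub_le_dist (c t) (c t')
  have h₃ := hτ.sub_le_dist (c t') q
  rw [hct] at h₁ h₂
  rw [hct'] at h₂ h₃
  have := hpoly t' ht' htt'
  exact ⟨by linarith, by linarith, by linarith⟩

lemma IsLevelCurve.dist_eq_dist (hτ : LipschitzWith 1 τ)
    (hc : IsLevelCurve τ p q (τ q - τ p) c) {t t' : ℝ} (ht : t ∈ Icc (τ p) (τ q))
    (ht' : t' ∈ Icc (τ p) (τ q)) : dist (c t) (c t') = dist t t' := by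
  rcases le_total t t' with htt' | htt'
  · rw [(hc.dist_eq hτ ht ht' htt').2.1, Real.dist_eq, abs_of_nonpos (by linarith)]
    ring
  · rw [dist_comm, (hc.dist_eq hτ ht' ht htt').2.1, Real.dist_eq, abs_of_nonneg (by linarith)]

end LevelCurve

lemma IsLevelCurve.exists_curve {M : Type*} [MetricSpace M] {τ : M → ℝ} {p q : M} {c : ℝ → M}
    (hτ : LipschitzWith 1 τ) (hpq : τ p ≤ τ q) (hc : IsLevelCurve τ p q (τ q - τ p) c) :
    ∃ C : ℝ → M, ContinuousOn C (Icc 0 1) ∧ C 0 = p ∧ C 1 = q ∧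
      ∀ s ∈ Icc (0 : ℝ) 1, ∀ s' ∈ Icc (0 : ℝ) 1, s ≤ s' →
        dist (C s) (C s') = τ (C s') - τ (C s) := by
  set ℓ : ℝ → ℝ := fun s => τ p + s * (τ q - τ p)
  have hℓ_maps : MapsTo ℓ (Icc 0 1) (Icc (τ p) (τ q)) := fun s hs =>
    ⟨by nlinarith [hs.1], by nlinarith [hs.2]⟩
  have hℓ_mono : Monotone ℓ := fun s s' hss' => by
    simp only [ℓ]; gcongr
  have hc_cont : ContinuousOn c (Icc (τ p) (τ q)) :=
    (LipschitzOnWith.of_dist_le' (K := 1) fun t ht t' ht' => by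
      rw [hc.dist_eq_dist hτ ht ht', one_mul]).continuousOn
  have hℓ0 : ℓ 0 = τ p := by simp [ℓ]
  have hℓ1 : ℓ 1 = τ q := by simp [ℓ]
  have hmem0 : τ p ∈ Icc (τ p) (τ q) := left_mem_Icc.2 hpq
  have hmem1 : τ q ∈ Icc (τ p) (τ q) := right_mem_Icc.2 hpq
  refine ⟨c ∘ ℓ, hc_cont.comp (by fun_prop) hℓ_maps, ?_, ?_, fun s hs s' hs' hss' => ?_⟩
  · simpa [hℓ0, eq_comm] using (hc.dist_eq hτ hmem0 hmem0 le_rfl).1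
  · simpa [hℓ1] using (hc.dist_eq hτ hmem1 hmem1 le_rfl).2.2
  · have := (hc.dist_eq hτ (hℓ_maps hs) (hℓ_maps hs') (hℓ_mono hss')).2.1
    simpa only [Function.comp_apply, (hc _ (hℓ_maps hs)).1, (hc _ (hℓ_maps hs')).1]

/-- Existence of a minimizing curve (metric version of Lemma 4.3).
`(M,d)` is a metric space, `τ : M → ℝ` is `1`-Lipschitz with compact preimages of
compact intervals.  If `d(p,q) = τ(q) − τ(p)` and for every `j ≥ 1` there is a
continuous curve from `p` to `q` of `d`-rectifiable length (total variation) less than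
`d(p,q) + 1/j`, then there is a continuous curve `C` from `p` to `q` with
`d(C(s), C(s')) = τ(C(s')) − τ(C(s))` for all `0 ≤ s ≤ s' ≤ 1`. -/
theorem exists_minimizing_curve {M : Type*} [MetricSpace M] (τ : M → ℝ)
    (hlip : LipschitzWith 1 τ)
    (hproper : ∀ a b : ℝ, IsCompact (τ ⁻¹' Set.Icc a b))
    (p q : M) (hpq : dist p q = τ q - τ p)
    (hβ : ∀ j : ℕ, 1 ≤ j → ∃ β : ℝ → M, ContinuousOn β (Set.Icc 0 1) ∧
      β 0 = p ∧ β 1 = q ∧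
      eVariationOn β (Set.Icc 0 1) < ENNReal.ofReal (dist p q + 1 / (j : ℝ))) :
    ∃ C : ℝ → M, ContinuousOn C (Set.Icc 0 1) ∧ C 0 = p ∧ C 1 = q ∧
      ∀ s ∈ Set.Icc (0:ℝ) 1, ∀ s' ∈ Set.Icc (0:ℝ) 1, s ≤ s' →
        dist (C s) (C s') = τ (C s') - τ (C s) := by
  choose β hβ_cont hβ0 hβ1 hβ_var using fun n : ℕ => hβ (n + 1) n.succ_pos
  have hγ (n : ℕ) : ∃ γ, IsLevelCurve τ p q (dist p q + 1 / ((n + 1 : ℕ) : ℝ)) γ := by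
    simpa only [hβ0 n, hβ1 n] using
      exists_isLevelCurve_of_eVariationOn_lt hlip.continuous zero_le_one (hβ_cont n) (hβ_var n)
  choose γ hγ using hγ
  have hL : Tendsto (fun n : ℕ => dist p q + 1 / ((n + 1 : ℕ) : ℝ)) atTop (𝓝 (τ q - τ p)) := by
    simpa [hpq] using tendsto_one_div_add_atTop_nhds_zero_nat.const_add (dist p q)
  obtain ⟨c, hc⟩ := exists_isLevelCurve_of_tendsto hlip.continuous (hproper _ _) hγ hL
  exact hc.exists_curve hlip (by linarith [dist_nonneg (x := p) (y := q)])
end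

section
/- Local-to-global causality along a minimizing curve: Let X be a set with a transitive relation ≼ and τ : X → ℝ monotone along ≼, with null distance d̂_τ. Assume that for every x ∈ X there is ρ(x) > 0 such that for all y with d̂_τ(x,y) < ρ(x): d̂_τ(x,y) = τ(y) − τ(x) implies x ≼ y, and d̂_τ(x,y) = τ(x) − τ(y) implies y ≼ x. Suppose C : [0,1] → X satisfies d̂_τ(C(s), C(s')) = τ(C(s')) − τ(C(s)) for all 0 ≤ s ≤ s' ≤ 1 and that τ ∘ C is continuous on [0,1]. Then C(0) ≼ C(1). -/
open scoped BigOperators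

lemma chain_reflect {X : Type*} {R : X → X → Prop} {k : ℕ} {x : ℕ → X} {p q : X}
    (h : IsCausalChain R k x p q) : IsCausalChain R k (fun i => x (k - i)) q p := by
  obtain ⟨hk, h0, hkq, hrel⟩ := h
  refine ⟨hk, by simpa using hkq, by simpa using h0, ?_⟩
  intro i hi
  have e1 : k - (i + 1) = k - 1 - i := by omega
  have e2 : k - i = k - 1 - i + 1 := by omega
  simp only []
  rw [e1, e2]
  exact (hrel (k - 1 - i) (by omega)).symm

lemma nullLength_reflect {X : Type*} (τ : X → ℝ) (k : ℕ) (x : ℕ → X) :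
    nullLength τ k (fun i => x (k - i)) = nullLength τ k x := by
  unfold nullLength
  rw [← Finset.sum_range_reflect (fun i => |τ (x (i + 1)) - τ (x i)|) k]
  refine Finset.sum_congr rfl ?_
  intro i hi
  simp only [Finset.mem_range] at hi
  have e1 : k - (i + 1) = k - 1 - i := by omega
  have e2 : k - i = k - 1 - i + 1 := by omega
  simp only []
  rw [e1, e2, abs_sub_comm]

lemma nullDist_le_symm {X : Type*} (R : X → X → Prop) (τ : X → ℝ) (p q : X) :
    nullDist R τ p q ≤ nullDist R τ q p := by
  refine le_sInf ?_
  rintro L ⟨k, x, hch, rfl⟩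
  refine sInf_le ⟨k, fun i => x (k - i), chain_reflect hch, ?_⟩
  rw [nullLength_reflect]

lemma nullDist_symm {X : Type*} (R : X → X → Prop) (τ : X → ℝ) (p q : X) :
    nullDist R τ p q = nullDist R τ q p :=
  le_antisymm (nullDist_le_symm R τ p q) (nullDist_le_symm R τ q p)

/-- Local-to-global causality along a minimizing curve.  If `≼` (here `R`)
is transitive, `τ` is monotone along `R`, `d̂_τ` locally encodes causality, and
`C : [0,1] → X` satisfies `d̂_τ(C(s), C(s')) = τ(C(s')) − τ(C(s))` for all
`0 ≤ s ≤ s' ≤ 1` with `τ ∘ C` continuous on `[0,1]`, then `C(0) ≼ C(1)`. -/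
theorem causal_along_minimizing_curve {X : Type*} (R : X → X → Prop) (τ : X → ℝ)
    (htrans : ∀ x y z, R x y → R y z → R x z)
    (hmono : ∀ x y, R x y → τ x ≤ τ y)
    (hlocal : ∀ x : X, ∃ ρ > (0:ℝ), ∀ y,
      nullDist R τ x y < ((ρ : ℝ) : EReal) →
      (nullDist R τ x y = ((τ y - τ x : ℝ) : EReal) → R x y) ∧
      (nullDist R τ x y = ((τ x - τ y : ℝ) : EReal) → R y x))
    (C : ℝ → X)
    (hC : ∀ s ∈ Set.Icc (0:ℝ) 1, ∀ s' ∈ Set.Icc (0:ℝ) 1, s ≤ s' →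
      nullDist R τ (C s) (C s') = ((τ (C s') - τ (C s) : ℝ) : EReal))
    (hcont : ContinuousOn (τ ∘ C) (Set.Icc 0 1)) :
    R (C 0) (C 1) := by
  have h01 : (0:ℝ) ∈ Set.Icc (0:ℝ) 1 := by constructor <;> norm_num
  have h11 : (1:ℝ) ∈ Set.Icc (0:ℝ) 1 := by constructor <;> norm_num
  -- key local step
  have key : ∀ a ∈ Set.Icc (0:ℝ) 1, ∀ b ∈ Set.Icc (0:ℝ) 1, a ≤ b →
      ∀ ρ > (0:ℝ), (∀ y,
        nullDist R τ (C b) y < ((ρ : ℝ) : EReal) →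
        (nullDist R τ (C b) y = ((τ y - τ (C b) : ℝ) : EReal) → R (C b) y) ∧
        (nullDist R τ (C b) y = ((τ (C b) - τ y : ℝ) : EReal) → R y (C b))) →
      |τ (C a) - τ (C b)| < ρ → R (C a) (C b) := by
    intro a ha b hb hab ρ hρ hloc habs
    have hd : nullDist R τ (C b) (C a) = ((τ (C b) - τ (C a) : ℝ) : EReal) := by
      rw [nullDist_symm]; exact hC a ha b hb hab
    have hlt : nullDist R τ (C b) (C a) < ((ρ : ℝ) : EReal) := by
      rw [hd]
      exact_mod_cast lt_of_le_of_lt (le_abs_self _) (by rwa [abs_sub_comm] at habs)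
    exact (hloc (C a) hlt).2 hd
  have keyF : ∀ a ∈ Set.Icc (0:ℝ) 1, ∀ b ∈ Set.Icc (0:ℝ) 1, a ≤ b →
      ∀ ρ > (0:ℝ), (∀ y,
        nullDist R τ (C a) y < ((ρ : ℝ) : EReal) →
        (nullDist R τ (C a) y = ((τ y - τ (C a) : ℝ) : EReal) → R (C a) y) ∧
        (nullDist R τ (C a) y = ((τ (C a) - τ y : ℝ) : EReal) → R y (C a))) →
      |τ (C b) - τ (C a)| < ρ → R (C a) (C b) := by
    intro a ha b hb hab ρ hρ hloc habs
    have hd : nullDist R τ (C a) (C b) = ((τ (C b) - τ (C a) : ℝ) : EReal) :=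
      hC a ha b hb hab
    have hlt : nullDist R τ (C a) (C b) < ((ρ : ℝ) : EReal) := by
      rw [hd]
      exact_mod_cast lt_of_le_of_lt (le_abs_self _) habs
    exact (hloc (C b) hlt).1 hd
  set A : Set ℝ := {s | s ∈ Set.Icc (0:ℝ) 1 ∧ R (C 0) (C s)} with hA
  have h0A : (0:ℝ) ∈ A := by
    obtain ⟨ρ, hρ, hloc⟩ := hlocal (C 0)
    exact ⟨h01, keyF 0 h01 0 h01 le_rfl ρ hρ hloc (by simpa using hρ)⟩
  have hbdd : BddAbove A := ⟨1, fun s hs => hs.1.2⟩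
  have hne : A.Nonempty := ⟨0, h0A⟩
  set m := sSup A with hm
  have hm0 : 0 ≤ m := le_csSup hbdd h0A
  have hm1 : m ≤ 1 := csSup_le hne fun s hs => hs.1.2
  have hmI : m ∈ Set.Icc (0:ℝ) 1 := ⟨hm0, hm1⟩
  obtain ⟨ρ, hρ, hloc⟩ := hlocal (C m)
  -- continuity at m
  have hcm : ContinuousWithinAt (τ ∘ C) (Set.Icc 0 1) m := hcont m hmI
  rw [Metric.continuousWithinAt_iff] at hcm
  obtain ⟨δ, hδ, hδ'⟩ := hcm ρ hρ
  -- m ∈ A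
  have hmA : R (C 0) (C m) := by
    obtain ⟨s, hsA, hs⟩ := exists_lt_of_lt_csSup hne (show m - δ < m by linarith)
    have hsm : s ≤ m := le_csSup hbdd hsA
    have hdist : dist s m < δ := by rw [Real.dist_eq]; rw [abs_lt]; constructor <;> linarith
    have := hδ' hsA.1 hdist
    rw [Real.dist_eq] at this
    exact htrans _ _ _ hsA.2
      (key s hsA.1 m hmI hsm ρ hρ hloc this)
  -- m = 1
  have hm1' : m = 1 := by
    by_contra hne1
    have hmlt : m < 1 := lt_of_le_of_ne hm1 hne1
    set s' := min 1 (m + δ / 2) with hs'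
    have hs'I : s' ∈ Set.Icc (0:ℝ) 1 := ⟨le_min (by norm_num) (by linarith), min_le_left _ _⟩
    have hms' : m < s' := lt_min hmlt (by linarith)
    have hdist : dist s' m < δ := by
      rw [Real.dist_eq, abs_lt]
      constructor
      · have := hms'; linarith
      · have : s' ≤ m + δ / 2 := min_le_right _ _; linarith
    have habs := hδ' hs'I hdist
    rw [Real.dist_eq] at habs
    have hR : R (C 0) (C s') :=
      htrans _ _ _ hmA (keyF m hmI s' hs'I hms'.le ρ hρ hloc habs)
    have : s' ≤ m := le_csSup hbdd ⟨hs'I, hR⟩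
    linarith
  rw [← hm1']
  exact hmA
end

section
/- Almost minimizing chains have short past segments (Lemma 3.2, chain version): Let X be a set with a reflexive relation ≼ and τ : X → ℝ monotone along ≼. Suppose p, q ∈ X admit at least one chain between them and d̂_τ(p,q) = τ(q) − τ(p). Then for every ε > 0 there exist k ≥ 0 and points x₀ = p, x₁, …, x_{2k+1} = q such that x_{2i} ≼ x_{2i+1} for all 0 ≤ i ≤ k and x_{2i+2} ≼ x_{2i+1} for all 0 ≤ i ≤ k−1, and the future increments satisfy Σ_{i=0}^{k} (τ(x_{2i+1}) − τ(x_{2i})) < d̂_τ(p,q) + ε while the past decrements satisfy Σ_{i=0}^{k−1} (τ(x_{2i+1}) − τ(x_{2i+2})) < ε. -/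
open scoped BigOperators

/-- Almost minimizing chains have short past segments (Lemma 3.2, chain
version).  If `≼` (here `R`) is reflexive, `τ` is monotone, `p, q` admit a chain and
`d̂_τ(p,q) = τ(q) − τ(p)`, then for every `ε > 0` there is a chain
`x₀ = p, …, x_{2k+1} = q` alternating future/past segments whose future increments
sum to less than `d̂_τ(p,q) + ε` and whose past decrements sum to less than `ε`. -/
theorem almost_minimizing_chain_short_past {X : Type*} (R : X → X → Prop) (τ : X → ℝ)
    (hrefl : ∀ x, R x x)
    (hmono : ∀ x y, R x y → τ x ≤ τ y)
    (p q : X) (hex : ∃ k x, IsCausalChain R k x p q)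
    (h : nullDist R τ p q = ((τ q - τ p : ℝ) : EReal)) :
    ∀ ε > (0:ℝ), ∃ (k : ℕ) (x : ℕ → X),
      x 0 = p ∧ x (2 * k + 1) = q ∧
      (∀ i ≤ k, R (x (2 * i)) (x (2 * i + 1))) ∧
      (∀ i < k, R (x (2 * i + 2)) (x (2 * i + 1))) ∧
      ((∑ i ∈ Finset.range (k + 1), (τ (x (2 * i + 1)) - τ (x (2 * i))) : ℝ) : EReal)
        < nullDist R τ p q + ((ε : ℝ) : EReal) ∧
      (∑ i ∈ Finset.range k, (τ (x (2 * i + 1)) - τ (x (2 * i + 2)))) < ε := by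
  intro ε hε
  classical
  -- extract an almost-minimizing chain
  obtain ⟨m, x, hc, hL⟩ : ∃ m x, IsCausalChain R m x p q ∧
      nullLength τ m x < τ q - τ p + ε := by
    have hlt : nullDist R τ p q < ((τ q - τ p + ε : ℝ) : EReal) := by
      rw [h]
      exact_mod_cast (by linarith : τ q - τ p < τ q - τ p + ε)
    obtain ⟨L, hLmem, hLlt⟩ := sInf_lt_iff.mp hlt
    obtain ⟨k, x, hc, rfl⟩ := hLmem
    exact ⟨k, x, hc, by exact_mod_cast hLlt⟩
  obtain ⟨hm1, hx0, hxm, hstep⟩ := hc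
  set y : ℕ → X := fun n => if Even n then x (n / 2)
    else if n / 2 < m ∧ R (x (n / 2)) (x (n / 2 + 1)) then x (n / 2 + 1) else x (n / 2)
    with hy
  have hy2 : ∀ i, y (2 * i) = x i := by
    intro i
    have h1 : Even (2 * i) := even_two_mul i
    have h2 : 2 * i / 2 = i := by omega
    simp [hy, h1, h2]
  have hy2' : ∀ i, y (2 * i + 1) =
      if i < m ∧ R (x i) (x (i + 1)) then x (i + 1) else x i := by
    intro i
    have h1 : ¬ Even (2 * i + 1) := by simp [Nat.even_add_one]
    have h2 : (2 * i + 1) / 2 = i := by omega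
    simp [hy, h1, h2]
  refine ⟨m, y, ?_, ?_, ?_, ?_, ?_, ?_⟩
  · simpa [hx0] using hy2 0
  · rw [hy2' m]
    simp [hxm]
  · intro i _
    rw [hy2 i, hy2' i]
    by_cases hcond : i < m ∧ R (x i) (x (i + 1))
    · rw [if_pos hcond]; exact hcond.2
    · rw [if_neg hcond]; exact hrefl _
  · intro i hi
    have h22 : 2 * i + 2 = 2 * (i + 1) := by ring
    rw [h22, hy2 (i + 1), hy2' i]
    by_cases hcond : i < m ∧ R (x i) (x (i + 1))
    · rw [if_pos hcond]; exact hrefl _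
    · rw [if_neg hcond]
      have : ¬ R (x i) (x (i + 1)) := fun hr => hcond ⟨hi, hr⟩
      exact (hstep i hi).resolve_left this
  all_goals {
    have key1 : (∑ i ∈ Finset.range (m + 1), (τ (y (2 * i + 1)) - τ (y (2 * i))))
        + (∑ i ∈ Finset.range m, (τ (y (2 * i + 1)) - τ (y (2 * i + 2))))
        = nullLength τ m x := by
      rw [Finset.sum_range_succ, hy2 m, hy2' m,
        if_neg (by simp : ¬ (m < m ∧ R (x m) (x (m+1)))), sub_self, add_zero,
        ← Finset.sum_add_distrib]
      unfold nullLength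
      refine Finset.sum_congr rfl fun i hi => ?_
      have hi' : i < m := Finset.mem_range.mp hi
      have h22 : 2 * i + 2 = 2 * (i + 1) := by ring
      rw [hy2 i, hy2' i, h22, hy2 (i + 1)]
      by_cases hcond : R (x i) (x (i + 1))
      · rw [if_pos ⟨hi', hcond⟩]
        have := hmono _ _ hcond
        rw [abs_of_nonneg (by linarith)]
        ring
      · rw [if_neg (fun hh => hcond hh.2)]
        have hr := (hstep i hi').resolve_left hcond
        have := hmono _ _ hr
        rw [abs_of_nonpos (by linarith)]
        ring
    have key2 : (∑ i ∈ Finset.range (m + 1), (τ (y (2 * i + 1)) - τ (y (2 * i))))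
        - (∑ i ∈ Finset.range m, (τ (y (2 * i + 1)) - τ (y (2 * i + 2))))
        = τ q - τ p := by
      rw [Finset.sum_range_succ, hy2 m, hy2' m,
        if_neg (by simp : ¬ (m < m ∧ R (x m) (x (m+1)))), sub_self, add_zero,
        ← Finset.sum_sub_distrib]
      have : (∑ i ∈ Finset.range m, ((τ (y (2 * i + 1)) - τ (y (2 * i)))
          - (τ (y (2 * i + 1)) - τ (y (2 * i + 2)))))
          = ∑ i ∈ Finset.range m, (τ (x (i + 1)) - τ (x i)) := by
        refine Finset.sum_congr rfl fun i hi => ?_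
        have h22 : 2 * i + 2 = 2 * (i + 1) := by ring
        rw [hy2 i, h22, hy2 (i + 1)]
        ring
      rw [this, Finset.sum_range_sub (fun i => τ (x i)), hx0, hxm]
    first
    | · -- future increments bound
        rw [h, ← EReal.coe_add]
        have : (∑ i ∈ Finset.range (m + 1), (τ (y (2 * i + 1)) - τ (y (2 * i))))
            < τ q - τ p + ε := by linarith
        exact_mod_cast this
    | · -- past decrements bound
        linarith
  }
end

section
/- Localized almost minimizing chains under the anti-Lipschitz condition (Lemma 3.3, chain version): Let X be a set with a reflexive relation ≼ and τ : X → ℝ monotone along ≼, let U ⊆ X, and let d_U be a metric on U such that for all x, y ∈ U, x ≼ y implies τ(y) − τ(x) ≥ d_U(x,y). Let p ∈ X and r > 0 be such that {x ∈ X : d̂_τ(p,x) < 2r} ⊆ U, and let 0 < ε < r. Then for every q with d̂_τ(p,q) < r and d̂_τ(p,q) = τ(q) − τ(p), there exist k ≥ 0 and points x₀ = p, x₁, …, x_{2k+1} = q, all lying in {x ∈ X : d̂_τ(p,x) < 2r} ⊆ U, such that x_{2i} ≼ x_{2i+1} for all 0 ≤ i ≤ k, x_{2i+2} ≼ x_{2i+1}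 for all 0 ≤ i ≤ k−1, Σ_{i=0}^{k} (τ(x_{2i+1}) − τ(x_{2i})) < d̂_τ(p,q) + ε, Σ_{i=0}^{k−1} (τ(x_{2i+1}) − τ(x_{2i+2})) < ε, and moreover Σ_{i=0}^{k−1} d_U(x_{2i+1}, x_{2i+2}) < ε. -/
open scoped BigOperators

/-!
An almost minimizing chain from `p` to `q` can be reshaped, by inserting repeated points (`≼` is
reflexive), into an alternating chain `x₀ ≼ x₁ ≽ x₂ ≼ ⋯ ≼ x_{2k+1}` of the same null length.
Along such a chain the null length is `F + P`, where `F` sums the future increments and `P` the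
past decrements, while telescoping gives `F - P = τ q - τ p = d̂_τ(p,q)`. So `F + P < d̂_τ(p,q) + ε`
forces `P < ε / 2`, and the anti-Lipschitz condition bounds the `d_U`-length of the past segments
by `P`. Every point of the chain is within null distance `d̂_τ(p,q) + ε < 2r` of `p`, hence in `U`.
-/

open Finset

theorem sum_range_two_mul_add_one {M : Type*} [AddCommMonoid M] (g : ℕ → M) (m : ℕ) :
    ∑ j ∈ range (2 * m + 1), g j
      = ∑ i ∈ range (m + 1), g (2 * i) + ∑ i ∈ range m, g (2 * i + 1) := by
  induction m with
  | zero => simp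
  | succ m ih =>
    rw [show 2 * (m + 1) + 1 = 2 * m + 1 + 1 + 1 by ring, sum_range_succ, sum_range_succ, ih,
      sum_range_succ (fun i => g (2 * i)) (m + 1), sum_range_succ (fun i => g (2 * i + 1)) m,
      show 2 * (m + 1) = 2 * m + 1 + 1 by ring]
    abel

section

variable {X : Type*} {R : X → X → Prop} {τ : X → ℝ}

theorem nullLength_nonneg (τ : X → ℝ) (k : ℕ) (x : ℕ → X) : 0 ≤ nullLength τ k x :=
  sum_nonneg fun _ _ => abs_nonneg _

theorem nullLength_mono (τ : X → ℝ) (x : ℕ → X) : Monotone fun k => nullLength τ k x :=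
  fun _ _ h => sum_le_sum_of_subset_of_nonneg (range_subset_range.2 h) fun _ _ _ => abs_nonneg _

theorem nullDist_le_nullLength {k : ℕ} {x : ℕ → X} {p q : X} (hx : IsCausalChain R k x p q) :
    nullDist R τ p q ≤ nullLength τ k x :=
  sInf_le ⟨k, x, hx, rfl⟩

theorem exists_isCausalChain_nullLength_lt {p q : X} {c : ℝ} (h : nullDist R τ p q < c) :
    ∃ k x, IsCausalChain R k x p q ∧ nullLength τ k x < c := by
  obtain ⟨_, ⟨k, x, hx, rfl⟩, hlt⟩ := sInf_lt_iff.mp h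
  exact ⟨k, x, hx, EReal.coe_lt_coe_iff.mp hlt⟩

theorem nullDist_self_nonpos (hrefl : ∀ x, R x x) (p : X) : nullDist R τ p p ≤ 0 := by
  simpa [nullLength] using nullDist_le_nullLength (τ := τ) (k := 1) (x := fun _ => p)
    ⟨le_rfl, rfl, rfl, fun _ _ => Or.inl (hrefl p)⟩

structure IsAlternatingChain (R : X → X → Prop) (m : ℕ) (y : ℕ → X) (p q : X) : Prop where
  first : y 0 = p
  last : y (2 * m + 1) = q
  forward : ∀ i ≤ m, R (y (2 * i)) (y (2 * i + 1))
  backward : ∀ i < m, R (y (2 * i + 2)) (y (2 * i + 1))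

namespace IsAlternatingChain

variable {m : ℕ} {y : ℕ → X} {p q : X}

theorem isCausalChain (hy : IsAlternatingChain R m y p q) {j : ℕ} (hj₀ : 1 ≤ j)
    (hj : j ≤ 2 * m + 1) : IsCausalChain R j y p (y j) := by
  refine ⟨hj₀, hy.first, rfl, fun i hi => ?_⟩
  obtain ⟨t, rfl | rfl⟩ := Nat.even_or_odd' i
  · exact Or.inl (hy.forward t (by omega))
  · exact Or.inr (hy.backward t (by omega))

theorem nullDist_le_nullLength (hrefl : ∀ x, R x x) (hy : IsAlternatingChain R m y p q)
    {j : ℕ} (hj : j ≤ 2 * m + 1) : nullDist R τ p (y j) ≤ nullLength τ (2 * m + 1) y := by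
  rcases Nat.eq_zero_or_pos j with rfl | hj₀
  · rw [hy.first]
    exact (nullDist_self_nonpos hrefl p).trans (EReal.coe_nonneg.2 (nullLength_nonneg τ _ y))
  · exact (_root_.nullDist_le_nullLength (hy.isCausalChain hj₀ hj)).trans
      (EReal.coe_le_coe_iff.2 (nullLength_mono τ y hj))

theorem nullLength_eq_sum_forward_add_sum_backward (hmono : ∀ x y, R x y → τ x ≤ τ y)
    (hy : IsAlternatingChain R m y p q) :
    nullLength τ (2 * m + 1) y
      = ∑ i ∈ range (m + 1), (τ (y (2 * i + 1)) - τ (y (2 * i)))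
        + ∑ i ∈ range m, (τ (y (2 * i + 1)) - τ (y (2 * i + 2))) := by
  rw [nullLength, sum_range_two_mul_add_one]
  congr 1
  · refine sum_congr rfl fun i hi => abs_of_nonneg (sub_nonneg.2 (hmono _ _ ?_))
    exact hy.forward i (Nat.lt_succ_iff.1 (mem_range.1 hi))
  · refine sum_congr rfl fun i hi => ?_
    rw [abs_sub_comm]
    exact abs_of_nonneg (sub_nonneg.2 (hmono _ _ (hy.backward i (mem_range.1 hi))))

theorem sum_forward_sub_sum_backward (τ : X → ℝ) (hy : IsAlternatingChain R m y p q) :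
    ∑ i ∈ range (m + 1), (τ (y (2 * i + 1)) - τ (y (2 * i)))
      - ∑ i ∈ range m, (τ (y (2 * i + 1)) - τ (y (2 * i + 2))) = τ q - τ p := by
  have h := sum_range_two_mul_add_one (fun j => τ (y (j + 1)) - τ (y j)) m
  rw [sum_range_sub (fun j => τ (y j)), hy.first, hy.last] at h
  rw [h, sub_eq_add_neg, ← sum_neg_distrib]
  simp only [neg_sub]

theorem sum_dist_le_sum_backward (hy : IsAlternatingChain R m y p q) {U : Set X}
    {dU : X → X → ℝ} (hd_symm : ∀ x ∈ U, ∀ y ∈ U, dU x y = dU y x)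
    (hanti : ∀ x ∈ U, ∀ y ∈ U, R x y → dU x y ≤ τ y - τ x) (hU : ∀ j ≤ 2 * m + 1, y j ∈ U) :
    ∑ i ∈ range m, dU (y (2 * i + 1)) (y (2 * i + 2))
      ≤ ∑ i ∈ range m, (τ (y (2 * i + 1)) - τ (y (2 * i + 2))) := by
  refine sum_le_sum fun i hi => ?_
  have hi := mem_range.1 hi
  rw [hd_symm _ (hU _ (by omega)) _ (hU _ (by omega))]
  exact hanti _ (hU _ (by omega)) _ (hU _ (by omega)) (hy.backward i hi)

end IsAlternatingChain

theorem IsCausalChain.exists_isAlternatingChain (hrefl : ∀ x, R x x) {k : ℕ} {x : ℕ → X}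
    {p q : X} (hx : IsCausalChain R k x p q) :
    ∃ y, IsAlternatingChain R k y p q ∧ nullLength τ (2 * k + 1) y = nullLength τ k x := by
  classical
  obtain ⟨-, hx₀, hxk, hstep⟩ := hx
  -- step `i` of `x` becomes `x i ≼ b i ≽ x (i + 1)`, with `b i` the later end of the step
  let b i := if i < k ∧ R (x i) (x (i + 1)) then x (i + 1) else x i
  let y j := if j % 2 = 0 then x (j / 2) else b (j / 2)
  have hy_even (i : ℕ) : y (2 * i) = x i := by simp [y]
  have hy_even' (i : ℕ) : y (2 * i + 1 + 1) = x (i + 1) := hy_even (i + 1)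
  have hy_odd (i : ℕ) : y (2 * i + 1) = b i := by
    simp only [y, show (2 * i + 1) % 2 = 1 by omega, show (2 * i + 1) / 2 = i by omega]; rfl
  have hbk : b k = x k := if_neg fun h => lt_irrefl k h.1
  refine ⟨y, ⟨?_, ?_, fun i _ => ?_, fun i hi => ?_⟩, ?_⟩
  · simpa [hx₀] using hy_even 0
  · rw [hy_odd, hbk, hxk]
  · rw [hy_even, hy_odd]
    by_cases h : i < k ∧ R (x i) (x (i + 1)) <;> simp [b, h, hrefl]
  · rw [hy_even', hy_odd]
    by_cases h : R (x i) (x (i + 1))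
    · simpa [b, h, hi] using hrefl (x (i + 1))
    · simpa [b, h, hi] using (hstep i hi).resolve_left h
  · rw [nullLength, nullLength, sum_range_two_mul_add_one, sum_range_succ, add_right_comm,
      ← sum_add_distrib]
    simp only [hy_even, hy_even', hy_odd, hbk, sub_self, abs_zero, add_zero]
    refine sum_congr rfl fun i _ => ?_
    by_cases h : i < k ∧ R (x i) (x (i + 1)) <;> simp [b, h, abs_sub_comm]

end

theorem localized_almost_minimizing_chain_general {X : Type*} (R : X → X → Prop) (τ : X → ℝ)
    (hrefl : ∀ x, R x x)
    (hmono : ∀ x y, R x y → τ x ≤ τ y)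
    (U : Set X) (dU : X → X → ℝ)
    (hd_symm : ∀ x ∈ U, ∀ y ∈ U, dU x y = dU y x)
    (hanti : ∀ x ∈ U, ∀ y ∈ U, R x y → dU x y ≤ τ y - τ x)
    (p : X) (r : ℝ)
    (hball : {x : X | nullDist R τ p x < ((2 * r : ℝ) : EReal)} ⊆ U)
    (ε : ℝ) (hε : 0 < ε) (hεr : ε < r)
    (q : X) (hq : nullDist R τ p q < ((r : ℝ) : EReal))
    (h : nullDist R τ p q = ((τ q - τ p : ℝ) : EReal)) :
    ∃ (k : ℕ) (x : ℕ → X),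
      x 0 = p ∧ x (2 * k + 1) = q ∧
      (∀ j ≤ 2 * k + 1, nullDist R τ p (x j) < ((2 * r : ℝ) : EReal)) ∧
      (∀ i ≤ k, R (x (2 * i)) (x (2 * i + 1))) ∧
      (∀ i < k, R (x (2 * i + 2)) (x (2 * i + 1))) ∧
      ((∑ i ∈ Finset.range (k + 1), (τ (x (2 * i + 1)) - τ (x (2 * i))) : ℝ) : EReal)
        < nullDist R τ p q + ((ε : ℝ) : EReal) ∧
      (∑ i ∈ Finset.range k, (τ (x (2 * i + 1)) - τ (x (2 * i + 2)))) < ε ∧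
      (∑ i ∈ Finset.range k, dU (x (2 * i + 1)) (x (2 * i + 2))) < ε := by
  have hqr : τ q - τ p < r := by rw [h] at hq; exact_mod_cast hq
  obtain ⟨k, x, hx, hlen⟩ := exists_isCausalChain_nullLength_lt (R := R) (τ := τ)
    (c := τ q - τ p + ε) (by rw [h]; exact_mod_cast lt_add_of_pos_right _ hε)
  obtain ⟨y, hy, hylen⟩ := hx.exists_isAlternatingChain (τ := τ) hrefl
  have hsplit := hy.nullLength_eq_sum_forward_add_sum_backward hmono
  have htel := hy.sum_forward_sub_sum_backward τ
  have hnear (j : ℕ) (hj : j ≤ 2 * k + 1) : nullDist R τ p (y j) < ((2 * r : ℝ) : EReal) :=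
    (hy.nullDist_le_nullLength hrefl hj).trans_lt (by exact_mod_cast (by linarith))
  have hdist := hy.sum_dist_le_sum_backward hd_symm hanti fun j hj => hball (hnear j hj)
  refine ⟨k, y, hy.first, hy.last, hnear, hy.forward, hy.backward, ?_, by linarith, by linarith⟩
  rw [h]
  exact_mod_cast (by linarith : _ < τ q - τ p + ε)

/-- Localized almost minimizing chains under the anti-Lipschitz condition
(Lemma 3.3, chain version).  `d_U` is a metric on `U ⊆ X` such that `τ` is
anti-Lipschitz on `U`; the `d̂_τ`-ball of radius `2r` about `p` is contained in `U`.
For `0 < ε < r` and any `q` with `d̂_τ(p,q) < r` and `d̂_τ(p,q) = τ(q) − τ(p)`,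
there is an alternating chain from `p` to `q` lying in that ball with small future
excess, small past decrements, and total `d_U`-length of past segments less than `ε`. -/
theorem localized_almost_minimizing_chain {X : Type*} (R : X → X → Prop) (τ : X → ℝ)
    (hrefl : ∀ x, R x x)
    (hmono : ∀ x y, R x y → τ x ≤ τ y)
    (U : Set X) (dU : X → X → ℝ)
    (hd_eq : ∀ x ∈ U, ∀ y ∈ U, (dU x y = 0 ↔ x = y))
    (hd_symm : ∀ x ∈ U, ∀ y ∈ U, dU x y = dU y x)
    (hd_tri : ∀ x ∈ U, ∀ y ∈ U, ∀ z ∈ U, dU x z ≤ dU x y + dU y z)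
    (hanti : ∀ x ∈ U, ∀ y ∈ U, R x y → dU x y ≤ τ y - τ x)
    (p : X) (r : ℝ) (hr : 0 < r)
    (hball : {x : X | nullDist R τ p x < ((2 * r : ℝ) : EReal)} ⊆ U)
    (ε : ℝ) (hε : 0 < ε) (hεr : ε < r)
    (q : X) (hq : nullDist R τ p q < ((r : ℝ) : EReal))
    (h : nullDist R τ p q = ((τ q - τ p : ℝ) : EReal)) :
    ∃ (k : ℕ) (x : ℕ → X),
      x 0 = p ∧ x (2 * k + 1) = q ∧
      (∀ j ≤ 2 * k + 1, nullDist R τ p (x j) < ((2 * r : ℝ) : EReal)) ∧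
      (∀ i ≤ k, R (x (2 * i)) (x (2 * i + 1))) ∧
      (∀ i < k, R (x (2 * i + 2)) (x (2 * i + 1))) ∧
      ((∑ i ∈ Finset.range (k + 1), (τ (x (2 * i + 1)) - τ (x (2 * i))) : ℝ) : EReal)
        < nullDist R τ p q + ((ε : ℝ) : EReal) ∧
      (∑ i ∈ Finset.range k, (τ (x (2 * i + 1)) - τ (x (2 * i + 2)))) < ε ∧
      (∑ i ∈ Finset.range k, dU (x (2 * i + 1)) (x (2 * i + 2))) < ε :=
  localized_almost_minimizing_chain_general R τ hrefl hmono U dU hd_symm hanti p r hball ε hε hεr q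
    hq h
end

section
/- In (n+1)-dimensional Minkowski space (n ≥ 1) with the canonical time function τ(p) = p₀, the null distance is given explicitly by d̂_τ(p,q) = max{ |q₀ − p₀|, ‖q̄ − p̄‖ } for all p, q. In particular, the d̂_τ-ball of radius R about p is the cylinder {q : |q₀ − p₀| < R and ‖q̄ − p̄‖ < R}. -/
/-!
Along any chain the increments of `τ` telescope to `q₀ - p₀`, and each causal step moves the
spatial position by at most its time increment, so every chain has null length at least
`max |q₀ - p₀| ‖q̄ - p̄‖`. Conversely, if `p` and `q` are causally related the one-step chain
attains `|q₀ - p₀|`; otherwise the future light cones of `p` and `q` meet at a point `m` above the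
segment `[p̄, q̄]`, and the broken null path `p ≼ m ≽ q` has null length `‖q̄ - p̄‖`.
-/

open scoped BigOperators

section Chains

variable {X : Type*} {R : X → X → Prop} {τ : X → ℝ} {p q : X}

theorem norm_sub_le_nullLength {E : Type*} [SeminormedAddCommGroup E] (φ : X → E)
    (hφ : ∀ a b, R a b → ‖φ b - φ a‖ ≤ |τ b - τ a|) {k : ℕ} {x : ℕ → X}
    (hx : IsCausalChain R k x p q) :
    ‖φ q - φ p‖ ≤ nullLength τ k x := by
  obtain ⟨-, rfl, rfl, hstep⟩ := hx
  rw [← Finset.sum_range_sub (fun i => φ (x i))]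
  refine (norm_sum_le _ _).trans (Finset.sum_le_sum fun i hi => ?_)
  rcases hstep i (Finset.mem_range.mp hi) with h | h
  · exact hφ _ _ h
  · simpa only [norm_sub_rev, abs_sub_comm] using hφ _ _ h

theorem abs_sub_le_nullLength {k : ℕ} {x : ℕ → X} (hx : IsCausalChain R k x p q) :
    |τ q - τ p| ≤ nullLength τ k x :=
  norm_sub_le_nullLength τ (fun _ _ _ => le_rfl) hx

theorem exists_chain_nullLength_eq_of_rel (h : R p q ∨ R q p) :
    ∃ k x, IsCausalChain R k x p q ∧ nullLength τ k x = |τ q - τ p| := by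
  refine ⟨1, fun i => if i = 0 then p else q, ⟨le_rfl, rfl, rfl, fun i hi => ?_⟩, ?_⟩
  · obtain rfl : i = 0 := by omega
    simpa using h
  · simp [nullLength]

theorem exists_chain_nullLength_eq_of_rel_of_rel {m : X} (hpm : R p m ∨ R m p)
    (hmq : R m q ∨ R q m) :
    ∃ k x, IsCausalChain R k x p q ∧ nullLength τ k x = |τ m - τ p| + |τ q - τ m| := by
  refine ⟨2, fun i => if i = 0 then p else if i = 1 then m else q,
    ⟨one_le_two, rfl, rfl, fun i hi => ?_⟩, ?_⟩
  · interval_cases i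
    · simpa using hpm
    · simpa using hmq
  · simp [nullLength, Finset.sum_range_succ]

theorem nullDist_eq_of_isLeast {d : ℝ}
    (hle : ∀ k x, IsCausalChain R k x p q → d ≤ nullLength τ k x)
    (hex : ∃ k x, IsCausalChain R k x p q ∧ nullLength τ k x = d) :
    nullDist R τ p q = d := by
  refine IsLeast.csInf_eq ⟨?_, ?_⟩
  · obtain ⟨k, x, hx, hd⟩ := hex
    exact ⟨k, x, hx, by rw [hd]⟩
  · rintro _ ⟨k, x, hx, rfl⟩
    exact_mod_cast hle k x hx

end Chains

section Minkowski

variable {n : ℕ}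

theorem minkCausal.norm_sub_le_abs {a b : ℝ × EuclideanSpace ℝ (Fin n)} (h : minkCausal a b) :
    ‖b.2 - a.2‖ ≤ |b.1 - a.1| :=
  h.trans (le_abs_self _)

theorem minkCausal_or_of_norm_le_abs {p q : ℝ × EuclideanSpace ℝ (Fin n)}
    (h : ‖q.2 - p.2‖ ≤ |q.1 - p.1|) : minkCausal p q ∨ minkCausal q p := by
  unfold minkCausal
  rw [norm_sub_rev p.2]
  cases abs_cases (q.1 - p.1) <;> [left; right] <;> linarith

theorem max_le_nullLength_of_isCausalChain {p q : ℝ × EuclideanSpace ℝ (Fin n)} {k : ℕ}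
    {x : ℕ → ℝ × EuclideanSpace ℝ (Fin n)} (hx : IsCausalChain minkCausal k x p q) :
    max |q.1 - p.1| ‖q.2 - p.2‖ ≤ nullLength Prod.fst k x :=
  max_le (abs_sub_le_nullLength hx)
    (norm_sub_le_nullLength Prod.snd (fun _ _ h => h.norm_sub_le_abs) hx)

theorem exists_minkCausal_apex {p q : ℝ × EuclideanSpace ℝ (Fin n)}
    (h : |q.1 - p.1| < ‖q.2 - p.2‖) :
    ∃ m, minkCausal p m ∧ minkCausal q m ∧ (m.1 - p.1) + (m.1 - q.1) = ‖q.2 - p.2‖ := by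
  set D := ‖q.2 - p.2‖
  set s := (D + (q.1 - p.1)) / 2 with hs
  obtain ⟨hTD, hDT⟩ := abs_lt.mp h
  have hD : 0 < D := (abs_nonneg _).trans_lt h
  have hdist : dist p.2 q.2 = D := by rw [dist_comm, dist_eq_norm]
  have hc0 : 0 ≤ s / D := div_nonneg (by linarith) hD.le
  have hc1 : s / D ≤ 1 := (div_le_one hD).mpr (by linarith)
  refine ⟨(p.1 + s, AffineMap.lineMap p.2 q.2 (s / D)), ?_, ?_, by simp only; ring⟩
  · change ‖_ - _‖ ≤ _
    rw [← dist_eq_norm, dist_lineMap_left, hdist, Real.norm_of_nonneg hc0,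
      div_mul_cancel₀ _ hD.ne']
    simp only [add_sub_cancel_left, le_refl]
  · change ‖_ - _‖ ≤ _
    rw [← dist_eq_norm, dist_lineMap_right, hdist, Real.norm_of_nonneg (by linarith),
      sub_mul, div_mul_cancel₀ _ hD.ne']
    simp only
    linarith

theorem exists_chain_nullLength_eq_max (p q : ℝ × EuclideanSpace ℝ (Fin n)) :
    ∃ k x, IsCausalChain minkCausal k x p q ∧
      nullLength Prod.fst k x = max |q.1 - p.1| ‖q.2 - p.2‖ := by
  rcases le_or_gt ‖q.2 - p.2‖ |q.1 - p.1| with h | h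
  · rw [max_eq_left h]
    exact exists_chain_nullLength_eq_of_rel (minkCausal_or_of_norm_le_abs h)
  · obtain ⟨m, hpm, hqm, hsum⟩ := exists_minkCausal_apex h
    obtain ⟨k, x, hx, hlen⟩ :=
      exists_chain_nullLength_eq_of_rel_of_rel (τ := Prod.fst) (Or.inl hpm) (Or.inr hqm)
    refine ⟨k, x, hx, ?_⟩
    have hpm' : 0 ≤ m.1 - p.1 := (norm_nonneg _).trans hpm
    have hqm' : 0 ≤ m.1 - q.1 := (norm_nonneg _).trans hqm
    rw [hlen, max_eq_right h.le, abs_of_nonneg hpm', abs_sub_comm, abs_of_nonneg hqm', hsum]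

theorem nullDist_minkCausal_eq_max (p q : ℝ × EuclideanSpace ℝ (Fin n)) :
    nullDist minkCausal Prod.fst p q = ((max |q.1 - p.1| ‖q.2 - p.2‖ : ℝ) : EReal) :=
  nullDist_eq_of_isLeast (fun _ _ => max_le_nullLength_of_isCausalChain)
    (exists_chain_nullLength_eq_max p q)

end Minkowski

theorem nullDist_minkowski_formula_general (n : ℕ) :
    (∀ p q : ℝ × EuclideanSpace ℝ (Fin n),
      nullDist minkCausal (fun x => x.1) p q
        = ((max |q.1 - p.1| ‖q.2 - p.2‖ : ℝ) : EReal)) ∧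
    (∀ (p : ℝ × EuclideanSpace ℝ (Fin n)) (R : ℝ),
      {q : ℝ × EuclideanSpace ℝ (Fin n) |
          nullDist minkCausal (fun x => x.1) p q < ((R : ℝ) : EReal)}
        = {q : ℝ × EuclideanSpace ℝ (Fin n) | |q.1 - p.1| < R ∧ ‖q.2 - p.2‖ < R}) := by
  refine ⟨nullDist_minkCausal_eq_max, fun p R => ?_⟩
  ext q
  rw [Set.mem_ofPred_eq, nullDist_minkCausal_eq_max, EReal.coe_lt_coe_iff, max_lt_iff,
    Set.mem_ofPred_eq]

/-- In (n+1)-dimensional Minkowski space (n ≥ 1) with `τ(p) = p₀`,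
the null distance is `d̂_τ(p,q) = max{|q₀ − p₀|, ‖q̄ − p̄‖}`; in particular the
`d̂_τ`-ball of radius `R` about `p` is the open cylinder
`{q : |q₀ − p₀| < R and ‖q̄ − p̄‖ < R}`. -/
theorem nullDist_minkowski_formula (n : ℕ) (hn : 1 ≤ n) :
    (∀ p q : ℝ × EuclideanSpace ℝ (Fin n),
      nullDist minkCausal (fun x => x.1) p q
        = ((max |q.1 - p.1| ‖q.2 - p.2‖ : ℝ) : EReal)) ∧
    (∀ (p : ℝ × EuclideanSpace ℝ (Fin n)) (R : ℝ),
      {q : ℝ × EuclideanSpace ℝ (Fin n) |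
          nullDist minkCausal (fun x => x.1) p q < ((R : ℝ) : EReal)}
        = {q : ℝ × EuclideanSpace ℝ (Fin n) | |q.1 - p.1| < R ∧ ‖q.2 - p.2‖ < R}) :=
  nullDist_minkowski_formula_general n
end

section
/- Failure of definiteness without the anti-Lipschitz condition (Example 2.1): In (n+1)-dimensional Minkowski space (n ≥ 1) with the generalized time function τ(p) = p₀³, for any two points p = (0, p̄) and q = (0, q̄) on the slice {p₀ = 0} one has d̂_τ(p,q) = 0. In particular d̂_τ is not definite and does not encode causality. -/
open scoped BigOperators

lemma staircase (n N : ℕ) (hN : 1 ≤ N) (pbar qbar : EuclideanSpace ℝ (Fin n)) :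
    ∃ k x, IsCausalChain minkCausal k x ((0:ℝ), pbar) ((0:ℝ), qbar) ∧
      nullLength (fun x => x.1 ^ 3) k x
        = 2 * N * (((‖qbar - pbar‖ + 1) / (2 * N)) ^ 3) := by
  set D : ℝ := ‖qbar - pbar‖ with hD
  have hDnn : 0 ≤ D := norm_nonneg _
  have hNpos : (0:ℝ) < 2 * N := by positivity
  set h : ℝ := (D + 1) / (2 * N) with hh
  have hhpos : 0 < h := by positivity
  set v := qbar - pbar with hv
  refine ⟨2 * N, fun i => (if Even i then 0 else h, pbar + ((i : ℝ) / (2 * N)) • v), ?_, ?_⟩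
  · refine ⟨by omega, ?_, ?_, ?_⟩
    · simp
    · have : ((2 * N : ℕ) : ℝ) / (2 * N) = 1 := by
        rw [div_eq_one_iff_eq (ne_of_gt hNpos)]; push_cast; ring
      simp only []
      rw [Prod.ext_iff]
      constructor
      · simp [Nat.even_mul]
      · show pbar + (((2 * N : ℕ) : ℝ) / (2 * N)) • v = qbar
        rw [this, one_smul, hv]
        abel
    · intro i hi
      have hstep : ∀ j : ℕ, ‖(pbar + (((j+1) : ℝ) / (2 * N)) • v) - (pbar + ((j : ℝ) / (2 * N)) • v)‖ = D / (2 * N) := by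
        intro j
        have : (pbar + (((j+1) : ℝ) / (2 * N)) • v) - (pbar + ((j : ℝ) / (2 * N)) • v)
            = ((1 : ℝ) / (2 * N)) • v := by
          rw [add_sub_add_left_eq_sub, ← sub_smul]; ring_nf
        rw [this, norm_smul]
        simp [abs_of_pos (by positivity : (0:ℝ) < 1 / (2*N)), div_eq_mul_inv, ← hD]
        ring
      have hbound : D / (2 * N) ≤ h := by
        rw [hh]
        gcongr; linarith
      rcases Nat.even_or_odd i with he | ho
      · left
        have hne : ¬ Even (i + 1) := by simp [Nat.even_add_one, he]
        simp only [minkCausal, he, hne, if_pos, if_neg, if_true]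
        push_cast
        rw [hstep i]
        simpa using hbound
      · right
        have he1 : Even (i + 1) := Odd.add_one ho
        have hne : ¬ Even i := Nat.not_even_iff_odd.mpr ho
        simp only [minkCausal, he1, hne, if_pos, if_neg, if_true]
        push_cast
        have : ‖(pbar + ((i : ℝ) / (2 * N)) • v) - (pbar + (((i:ℝ)+1) / (2 * N)) • v)‖ = D / (2*N) := by
          rw [norm_sub_rev]
          have := hstep i; push_cast at this; exact this
        rw [this]
        simpa using hbound
  · unfold nullLength
    have : ∀ i ∈ Finset.range (2 * N),
        |(if Even (i+1) then (0:ℝ) else h) ^ 3 - (if Even i then (0:ℝ) else h) ^ 3| = h ^ 3 := by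
      intro i _
      rcases Nat.even_or_odd i with he | ho
      · have : ¬ Even (i + 1) := by simp [Nat.even_add_one, he]
        rw [if_neg this, if_pos he]
        simp [abs_of_nonneg (by positivity : (0:ℝ) ≤ h ^ 3)]
      · have h1 : Even (i + 1) := Odd.add_one ho
        have h2 : ¬ Even i := Nat.not_even_iff_odd.mpr ho
        rw [if_pos h1, if_neg h2]
        simp [abs_of_nonneg (by positivity : (0:ℝ) ≤ h ^ 3)]
    calc ∑ i ∈ Finset.range (2*N), |((if Even (i+1) then (0:ℝ) else h)) ^ 3 - ((if Even i then (0:ℝ) else h)) ^ 3|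
        = ∑ i ∈ Finset.range (2*N), h ^ 3 := Finset.sum_congr rfl this
      _ = 2 * N * h ^ 3 := by rw [Finset.sum_const]; push_cast [Finset.card_range]; ring

lemma slice_nullDist_zero (n : ℕ) (pbar qbar : EuclideanSpace ℝ (Fin n)) :
    nullDist minkCausal (fun x => x.1 ^ 3) ((0:ℝ), pbar) ((0:ℝ), qbar) = (0 : EReal) := by
  set S := {L : EReal | ∃ k x, IsCausalChain minkCausal k x ((0:ℝ), pbar) ((0:ℝ), qbar) ∧
      L = ((nullLength (fun x => x.1 ^ 3) k x : ℝ) : EReal)} with hS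
  have hlow : (0 : EReal) ≤ sInf S := by
    apply le_sInf
    rintro L ⟨k, x, _, rfl⟩
    have : (0:ℝ) ≤ nullLength (fun x => x.1 ^ 3) k x :=
      Finset.sum_nonneg fun i _ => abs_nonneg _
    exact_mod_cast this
  have hup : sInf S ≤ 0 := by
    by_contra hc
    push_neg at hc
    obtain ⟨ε, hε0, hεlt⟩ := EReal.exists_between_coe_real hc
    have hε0' : (0:ℝ) < ε := by exact_mod_cast hε0
    set D : ℝ := ‖qbar - pbar‖
    obtain ⟨M, hM⟩ := exists_nat_gt ((D + 1) ^ 3 / ε)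
    set N := max M 1 with hNdef
    have hN1 : 1 ≤ N := le_max_right _ _
    obtain ⟨k, x, hchain, hlen⟩ := staircase n N hN1 pbar qbar
    have hmem : ((nullLength (fun x => x.1 ^ 3) k x : ℝ) : EReal) ∈ S :=
      ⟨k, x, hchain, rfl⟩
    have hle := sInf_le hmem
    have hNR : (1:ℝ) ≤ (N:ℝ) := by exact_mod_cast hN1
    have hval : nullLength (fun x => x.1 ^ 3) k x = (D + 1) ^ 3 / (4 * N ^ 2) := by
      rw [hlen]; field_simp; ring
    have hsmall : nullLength (fun x => x.1 ^ 3) k x < ε := by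
      rw [hval]
      have hMN : ((D + 1) ^ 3 / ε) < (N:ℝ) := lt_of_lt_of_le hM (by exact_mod_cast le_max_left M 1)
      have h1 : (D + 1) ^ 3 < ε * N := by
        rw [div_lt_iff₀ hε0'] at hMN; linarith
      have h2 : (N:ℝ) ≤ 4 * N ^ 2 := by nlinarith
      rw [div_lt_iff₀ (by positivity)]
      calc (D + 1) ^ 3 < ε * N := h1
        _ ≤ ε * (4 * N ^ 2) := by nlinarith
    have : sInf S < (ε : EReal) := lt_of_le_of_lt hle (by exact_mod_cast hsmall)
    exact absurd (lt_trans hεlt this) (lt_irrefl _)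
  exact le_antisymm hup hlow


/-- Failure of definiteness without the anti-Lipschitz condition
(Example 2.1).  In (n+1)-dimensional Minkowski space (n ≥ 1) with the generalized time
function `τ(p) = p₀³`, any two points on the slice `{p₀ = 0}` are at null distance `0`;
in particular `d̂_τ` is not definite and does not encode causality. -/
theorem nullDist_tCubed_degenerate (n : ℕ) (hn : 1 ≤ n) :
    (∀ pbar qbar : EuclideanSpace ℝ (Fin n),
      nullDist minkCausal (fun x => x.1 ^ 3) ((0:ℝ), pbar) ((0:ℝ), qbar) = (0 : EReal)) ∧
    (∃ p q : ℝ × EuclideanSpace ℝ (Fin n), p ≠ q ∧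
      nullDist minkCausal (fun x => x.1 ^ 3) p q = (0 : EReal)) ∧
    (∃ p q : ℝ × EuclideanSpace ℝ (Fin n),
      nullDist minkCausal (fun x => x.1 ^ 3) p q = ((q.1 ^ 3 - p.1 ^ 3 : ℝ) : EReal) ∧
      ¬ minkCausal p q) := by
  set e : EuclideanSpace ℝ (Fin n) := EuclideanSpace.single ⟨0, hn⟩ (1:ℝ) with he
  have hne : e ≠ 0 := by
    intro h
    have : ‖e‖ = 1 := by simp [he]
    rw [h] at this; simp at this
  refine ⟨slice_nullDist_zero n, ⟨((0:ℝ), 0), ((0:ℝ), e), ?_, slice_nullDist_zero n 0 e⟩,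
    ⟨((0:ℝ), 0), ((0:ℝ), e), ?_, ?_⟩⟩
  · intro h
    exact hne (by simpa using (Prod.ext_iff.mp h).2.symm)
  · simpa using slice_nullDist_zero n 0 e
  · intro h
    unfold minkCausal at h
    simp only [sub_zero] at h
    have : ‖e‖ = 1 := by simp [he]
    rw [this] at h; linarith
end

section
/- Null distance in Minkowski space with a half-line removed (Example 2.2, distance computation): Let N = {p ∈ ℝ × ℝ³ : p₀ > 0} \ {(t, 0, 0, 0) : t ≥ 2} with τ(p) = p₀, and let p = (1, (−1,0,0)) and q = (3, (1,0,0)). Then the null distance computed with chains in N satisfies d̂_τ(p,q) = 2 = τ(q) − τ(p). -/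
open scoped BigOperators

/-- `q ∈ J⁺_N(p)`: there is a continuous curve in `N ⊆ ℝ × ℝ³` from `p` to `q` that is
Minkowski-causal, i.e. `c(s) ≼ c(s')` for all `0 ≤ s ≤ s' ≤ 1`. -/
def inCausalFuture (N : Set (ℝ × EuclideanSpace ℝ (Fin 3)))
    (p q : ℝ × EuclideanSpace ℝ (Fin 3)) : Prop :=
  ∃ c : ℝ → ℝ × EuclideanSpace ℝ (Fin 3),
    ContinuousOn c (Set.Icc 0 1) ∧ (∀ s ∈ Set.Icc (0:ℝ) 1, c s ∈ N) ∧
    c 0 = p ∧ c 1 = q ∧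
    ∀ s ∈ Set.Icc (0:ℝ) 1, ∀ s' ∈ Set.Icc (0:ℝ) 1, s ≤ s' → minkCausal (c s) (c s')

/-- Minkowski upper half-space with the half-line `{(t,0,0,0) : t ≥ 2}` removed. -/
def slitHalfSpace : Set (ℝ × EuclideanSpace ℝ (Fin 3)) :=
  {x : ℝ × EuclideanSpace ℝ (Fin 3) | 0 < x.1} \
    {x : ℝ × EuclideanSpace ℝ (Fin 3) | 2 ≤ x.1 ∧ x.2 = 0}

/-- The straight segment from `a` to `b` in `ℝ × ℝ³`. -/
noncomputable def seg (a b : ℝ × EuclideanSpace ℝ (Fin 3)) (s : ℝ) :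
    ℝ × EuclideanSpace ℝ (Fin 3) :=
  (a.1 + s * (b.1 - a.1), a.2 + s • (b.2 - a.2))

lemma seg_inCausalFuture (N : Set (ℝ × EuclideanSpace ℝ (Fin 3)))
    (a b : ℝ × EuclideanSpace ℝ (Fin 3)) (hc : minkCausal a b)
    (hmem : ∀ s ∈ Set.Icc (0:ℝ) 1, seg a b s ∈ N) :
    inCausalFuture N a b := by
  refine ⟨seg a b, ?_, hmem, ?_, ?_, ?_⟩
  · apply Continuous.continuousOn
    unfold seg
    fun_prop
  · simp [seg]
  · simp [seg]
  · intro s _ s' _ hss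
    unfold minkCausal seg
    have h2 : (a.2 + s' • (b.2 - a.2)) - (a.2 + s • (b.2 - a.2)) = (s' - s) • (b.2 - a.2) := by
      rw [sub_smul]; abel
    simp only [h2, norm_smul, Real.norm_eq_abs, abs_of_nonneg (sub_nonneg.mpr hss)]
    have h1 : (a.1 + s' * (b.1 - a.1)) - (a.1 + s * (b.1 - a.1)) = (s' - s) * (b.1 - a.1) := by
      ring
    rw [h1]
    exact mul_le_mul_of_nonneg_left hc (sub_nonneg.mpr hss)

lemma norm_vec3 (v : EuclideanSpace ℝ (Fin 3)) :
    ‖v‖ = Real.sqrt (v 0 ^ 2 + v 1 ^ 2 + v 2 ^ 2) := by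
  rw [EuclideanSpace.norm_eq]
  simp [Fin.sum_univ_three, Real.norm_eq_abs, sq_abs]

theorem nullDist_slit_halfspace_aux :
    nullDist (inCausalFuture slitHalfSpace) (fun x => x.1)
        ((1 : ℝ), (WithLp.toLp 2 ![(-1:ℝ), 0, 0] : EuclideanSpace ℝ (Fin 3)))
        ((3 : ℝ), (WithLp.toLp 2 ![(1:ℝ), 0, 0] : EuclideanSpace ℝ (Fin 3)))
      = ((2 : ℝ) : EReal) := by
  set p : ℝ × EuclideanSpace ℝ (Fin 3) := ((1 : ℝ), (WithLp.toLp 2 ![(-1:ℝ), 0, 0] : EuclideanSpace ℝ (Fin 3))) with hp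
  set q : ℝ × EuclideanSpace ℝ (Fin 3) := ((3 : ℝ), (WithLp.toLp 2 ![(1:ℝ), 0, 0] : EuclideanSpace ℝ (Fin 3))) with hq
  set S : Set EReal := {L : EReal | ∃ k x, IsCausalChain (inCausalFuture slitHalfSpace) k x p q ∧
      L = ((nullLength (fun x => x.1) k x : ℝ) : EReal)} with hS
  have hlow : ((2:ℝ) : EReal) ≤ sInf S := by
    apply le_sInf
    rintro L ⟨k, x, ⟨hk, h0, hk', _⟩, rfl⟩
    rw [EReal.coe_le_coe_iff]
    have ht : ∑ i ∈ Finset.range k, ((x (i+1)).1 - (x i).1) = (x k).1 - (x 0).1 :=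
      Finset.sum_range_sub (fun i => (x i).1) k
    calc (2:ℝ) = |(x k).1 - (x 0).1| := by rw [h0, hk']; norm_num [hp, hq]
      _ = |∑ i ∈ Finset.range k, ((x (i+1)).1 - (x i).1)| := by rw [ht]
      _ ≤ ∑ i ∈ Finset.range k, |(x (i+1)).1 - (x i).1| := Finset.abs_sum_le_sum_abs _ _
      _ = nullLength (fun x => x.1) k x := rfl
  have hup : ∀ ε : ℝ, 0 < ε → sInf S ≤ ((2 + 2*ε : ℝ) : EReal) := by
    intro ε hε
    set m : ℝ × EuclideanSpace ℝ (Fin 3) := ((3 + ε : ℝ), (WithLp.toLp 2 ![(1:ℝ), ε, 0] : EuclideanSpace ℝ (Fin 3))) with hm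
    have hpm : inCausalFuture slitHalfSpace p m := by
      apply seg_inCausalFuture
      · unfold minkCausal
        rw [norm_vec3]
        have hcomp0 : (m.2 - p.2) 0 = 2 := by simp [hm, hp]; norm_num
        have hcomp1 : (m.2 - p.2) 1 = ε := by simp [hm, hp]
        have hcomp2 : (m.2 - p.2) 2 = 0 := by simp [hm, hp]
        rw [hcomp0, hcomp1, hcomp2]
        have h4 : (2:ℝ)^2 + ε^2 + 0^2 ≤ ((3+ε) - 1)^2 := by nlinarith
        calc Real.sqrt ((2:ℝ)^2 + ε^2 + 0^2) ≤ Real.sqrt (((3+ε) - 1)^2) :=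
              Real.sqrt_le_sqrt h4
          _ = (3+ε) - 1 := Real.sqrt_sq (by linarith)
          _ = m.1 - p.1 := by simp [hm, hp]
      · intro s hs
        obtain ⟨hs0, hs1⟩ := hs
        constructor
        · show 0 < (seg p m s).1
          simp only [seg, hp, hm]
          nlinarith
        · intro hbad
          obtain ⟨_, hzero⟩ := hbad
          have h1 : ((seg p m s).2) 1 = 0 := by rw [hzero]; rfl
          have h1' : s * ε = 0 := by
            simpa [seg, hp, hm] using h1
          have hs0' : s = 0 := by
            rcases mul_eq_zero.mp h1' with h | h
            · exact h
            · exact absurd h (ne_of_gt hε)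
          have h0 : ((seg p m s).2) 0 = 0 := by rw [hzero]; rfl
          rw [hs0'] at h0
          simp [seg, hp, hm] at h0
    have hqm : inCausalFuture slitHalfSpace q m := by
      apply seg_inCausalFuture
      · unfold minkCausal
        rw [norm_vec3]
        have hcomp0 : (m.2 - q.2) 0 = 0 := by simp [hm, hq]
        have hcomp1 : (m.2 - q.2) 1 = ε := by simp [hm, hq]
        have hcomp2 : (m.2 - q.2) 2 = 0 := by simp [hm, hq]
        rw [hcomp0, hcomp1, hcomp2]
        have : Real.sqrt ((0:ℝ)^2 + ε^2 + 0^2) = ε := by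
          rw [show (0:ℝ)^2 + ε^2 + 0^2 = ε^2 by ring]
          exact Real.sqrt_sq hε.le
        rw [this]
        simp [hm, hq]
      · intro s hs
        obtain ⟨hs0, hs1⟩ := hs
        constructor
        · show 0 < (seg q m s).1
          simp only [seg, hq, hm]
          nlinarith
        · intro hbad
          obtain ⟨_, hzero⟩ := hbad
          have h0 : ((seg q m s).2) 0 = 0 := by rw [hzero]; rfl
          simp [seg, hq, hm] at h0
    set x : ℕ → ℝ × EuclideanSpace ℝ (Fin 3) :=
      fun n => if n = 0 then p else if n = 1 then m else q with hx
    have hchain : IsCausalChain (inCausalFuture slitHalfSpace) 2 x p q := by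
      refine ⟨one_le_two, by simp [hx], by norm_num [hx], ?_⟩
      intro i hi
      interval_cases i
      · left; simpa [hx] using hpm
      · right; simpa [hx] using hqm
    have hlen : nullLength (fun x => x.1) 2 x = 2 + 2*ε := by
      unfold nullLength
      rw [Finset.sum_range_succ, Finset.sum_range_succ, Finset.sum_range_zero]
      have e0 : x 0 = p := by simp [hx]
      have e1 : x 1 = m := by simp [hx]
      have e2 : x 2 = q := by norm_num [hx]
      rw [e0, e1, e2]
      simp only [hp, hq, hm]
      rw [abs_of_nonneg (by linarith), abs_of_nonpos (by linarith)]
      ring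
    have hmemS : ((2 + 2*ε : ℝ) : EReal) ∈ S := ⟨2, x, hchain, by rw [hlen]⟩
    exact sInf_le hmemS
  show sInf S = ((2:ℝ) : EReal)
  refine le_antisymm ?_ hlow
  by_contra h
  push_neg at h
  obtain ⟨r, hr1, hr2⟩ := EReal.exists_between_coe_real h
  have hε : (0:ℝ) < (r - 2)/2 := by
    rw [EReal.coe_lt_coe_iff] at hr1
    linarith
  have := hup ((r-2)/2) hε
  rw [show (2 + 2*((r-2)/2) : ℝ) = r by ring] at this
  exact absurd (lt_of_le_of_lt this hr2) (lt_irrefl _)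

/-- Null distance in Minkowski space with a half-line removed
(Example 2.2, distance computation).  With `τ(p) = p₀`, `p = (1,(−1,0,0))` and
`q = (3,(1,0,0))`, the null distance computed using chains in `N` satisfies
`d̂_τ(p,q) = 2 = τ(q) − τ(p)`. -/
theorem nullDist_slit_halfspace :
    nullDist (inCausalFuture slitHalfSpace) (fun x => x.1)
        ((1 : ℝ), (WithLp.toLp 2 ![(-1:ℝ), 0, 0] : EuclideanSpace ℝ (Fin 3)))
        ((3 : ℝ), (WithLp.toLp 2 ![(1:ℝ), 0, 0] : EuclideanSpace ℝ (Fin 3)))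
      = ((2 : ℝ) : EReal) ∧
    (2 : ℝ) = (fun x : ℝ × EuclideanSpace ℝ (Fin 3) => x.1)
        ((3 : ℝ), (WithLp.toLp 2 ![(1:ℝ), 0, 0] : EuclideanSpace ℝ (Fin 3)))
      - (fun x : ℝ × EuclideanSpace ℝ (Fin 3) => x.1)
        ((1 : ℝ), (WithLp.toLp 2 ![(-1:ℝ), 0, 0] : EuclideanSpace ℝ (Fin 3))) := by
  exact ⟨nullDist_slit_halfspace_aux, by norm_num⟩
end

section
/- Failure of global causal encoding in Minkowski space with a half-line removed (Example 2.2, causality claim): Let N = {p ∈ ℝ × ℝ³ : p₀ > 0} \ {(t, 0, 0, 0) : t ≥ 2}, and let p = (1, (−1,0,0)) and q = (3, (1,0,0)). Then q ∉ J⁺_N(p): there is no continuous curve c : [0,1] → N with c(0) = p, c(1) = q and c(s) ≼ c(s') for all 0 ≤ s ≤ s' ≤ 1; indeed any such curve in ℝ × ℝ³ would have to pass through the removed point (2, (0,0,0)). -/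
/-- Each coordinate of a vector in `ℝ³` is at most its Euclidean norm. -/
lemma coord_le_norm3 (x : EuclideanSpace ℝ (Fin 3)) (i : Fin 3) : x i ≤ ‖x‖ := by
  rw [EuclideanSpace.norm_eq]
  have h1 : ‖x i‖ ^ 2 ≤ ∑ j, ‖x j‖ ^ 2 :=
    Finset.single_le_sum (f := fun j => ‖x j‖ ^ 2) (fun j _ => by positivity)
      (Finset.mem_univ i)
  calc x i ≤ |x i| := le_abs_self _
    _ = Real.sqrt (‖x i‖ ^ 2) := by
        rw [Real.norm_eq_abs, Real.sqrt_sq_eq_abs, abs_abs]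
    _ ≤ Real.sqrt (∑ j, ‖x j‖ ^ 2) := Real.sqrt_le_sqrt h1

/-- If the norm equals the 0th coordinate, the other coordinates vanish. -/
lemma coords_zero_of_norm_eq (x : EuclideanSpace ℝ (Fin 3)) (h : ‖x‖ = x 0) :
    x 1 = 0 ∧ x 2 = 0 := by
  have h2 : ‖x‖ ^ 2 = ∑ j, ‖x j‖ ^ 2 := by
    rw [EuclideanSpace.norm_eq, Real.sq_sqrt (by positivity)]
  rw [Fin.sum_univ_three] at h2
  simp only [Real.norm_eq_abs, sq_abs] at h2
  rw [h] at h2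
  constructor <;> nlinarith [sq_nonneg (x 1), sq_nonneg (x 2)]

/-- Equality case of the triangle inequality, in the concrete situation at hand. -/
lemma key3 (x pbar qbar : EuclideanSpace ℝ (Fin 3))
    (hp0 : pbar 0 = -1) (hp1 : pbar 1 = 0) (hp2 : pbar 2 = 0)
    (hq0 : qbar 0 = 1)
    (hca : ‖x - pbar‖ ≤ 1) (hcb : ‖qbar - x‖ ≤ 1) :
    x 0 = 0 ∧ x 1 = 0 ∧ x 2 = 0 := by
  have l1 : x 0 + 1 ≤ ‖x - pbar‖ := by
    have := coord_le_norm3 (x - pbar) 0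
    rwa [PiLp.sub_apply, hp0, sub_neg_eq_add] at this
  have l2 : 1 - x 0 ≤ ‖qbar - x‖ := by
    have := coord_le_norm3 (qbar - x) 0
    rwa [PiLp.sub_apply, hq0] at this
  have hx0 : x 0 = 0 := by linarith
  have hu : ‖x - pbar‖ = (x - pbar) 0 := by
    rw [PiLp.sub_apply, hp0, sub_neg_eq_add]; linarith
  obtain ⟨hz1, hz2⟩ := coords_zero_of_norm_eq _ hu
  rw [PiLp.sub_apply, hp1, sub_zero] at hz1
  rw [PiLp.sub_apply, hp2, sub_zero] at hz2
  exact ⟨hx0, hz1, hz2⟩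

/-- Every continuous causal curve from `p` to `q` passes through `(2,0)`. -/
lemma passes_through_aux :
    ∀ c : ℝ → ℝ × EuclideanSpace ℝ (Fin 3),
      ContinuousOn c (Set.Icc 0 1) →
      c 0 = ((1 : ℝ), (WithLp.toLp 2 ![(-1:ℝ), 0, 0] : EuclideanSpace ℝ (Fin 3))) →
      c 1 = ((3 : ℝ), (WithLp.toLp 2 ![(1:ℝ), 0, 0] : EuclideanSpace ℝ (Fin 3))) →
      (∀ s ∈ Set.Icc (0:ℝ) 1, ∀ s' ∈ Set.Icc (0:ℝ) 1, s ≤ s' → minkCausal (c s) (c s')) →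
      ∃ s ∈ Set.Icc (0:ℝ) 1, c s = ((2 : ℝ), (0 : EuclideanSpace ℝ (Fin 3))) := by
  intro c hc h0 h1 hcaus
  have hg : ContinuousOn (fun s => (c s).1) (Set.Icc (0:ℝ) 1) :=
    continuous_fst.comp_continuousOn hc
  have hmem : (2:ℝ) ∈ Set.Icc ((c 0).1) ((c 1).1) := by
    rw [h0, h1]; norm_num
  obtain ⟨s, hs, hgs⟩ := intermediate_value_Icc (by norm_num : (0:ℝ) ≤ 1) hg hmem
  refine ⟨s, hs, ?_⟩
  have h0mem : (0:ℝ) ∈ Set.Icc (0:ℝ) 1 := by norm_num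
  have h1mem : (1:ℝ) ∈ Set.Icc (0:ℝ) 1 := by norm_num
  have hca : minkCausal (c 0) (c s) := hcaus 0 h0mem s hs hs.1
  have hcb : minkCausal (c s) (c 1) := hcaus s hs 1 h1mem hs.2
  rw [h0] at hca
  rw [h1] at hcb
  unfold minkCausal at hca hcb
  simp only at hca hcb hgs
  rw [hgs] at hca hcb
  norm_num at hca hcb
  obtain ⟨hx0, hx1, hx2⟩ := key3 (c s).2 _ _ (by norm_num) (by norm_num) (by rfl)
    (by norm_num) hca hcb
  have hx : (c s).2 = 0 := by
    ext i
    fin_cases i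
    · simpa using hx0
    · simpa using hx1
    · simpa using hx2
  exact Prod.ext hgs hx

/-- Failure of global causal encoding in Minkowski space with a half-line
removed (Example 2.2, causality claim).  With `p = (1,(−1,0,0))` and `q = (3,(1,0,0))`,
`q ∉ J⁺_N(p)`; indeed every continuous causal curve in `ℝ × ℝ³` from `p` to `q` passes
through the removed point `(2,(0,0,0))`. -/
theorem not_in_causal_future_slit_halfspace :
    ¬ inCausalFuture slitHalfSpace
        ((1 : ℝ), (WithLp.toLp 2 ![(-1:ℝ), 0, 0] : EuclideanSpace ℝ (Fin 3)))
        ((3 : ℝ), (WithLp.toLp 2 ![(1:ℝ), 0, 0] : EuclideanSpace ℝ (Fin 3))) ∧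
    ∀ c : ℝ → ℝ × EuclideanSpace ℝ (Fin 3),
      ContinuousOn c (Set.Icc 0 1) →
      c 0 = ((1 : ℝ), (WithLp.toLp 2 ![(-1:ℝ), 0, 0] : EuclideanSpace ℝ (Fin 3))) →
      c 1 = ((3 : ℝ), (WithLp.toLp 2 ![(1:ℝ), 0, 0] : EuclideanSpace ℝ (Fin 3))) →
      (∀ s ∈ Set.Icc (0:ℝ) 1, ∀ s' ∈ Set.Icc (0:ℝ) 1, s ≤ s' → minkCausal (c s) (c s')) →
      ∃ s ∈ Set.Icc (0:ℝ) 1, c s = ((2 : ℝ), (0 : EuclideanSpace ℝ (Fin 3))) := by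
  constructor
  · rintro ⟨c, hc, hN, h0, h1, hcaus⟩
    obtain ⟨s, hs, hcs⟩ := passes_through_aux c hc h0 h1 hcaus
    have := hN s hs
    rw [hcs] at this
    exact this.2 ⟨by norm_num, rfl⟩
  · exact passes_through_aux
end

section
/- Cosmological time of the Minkowski upper half-space: Let M = {p ∈ ℝ × ℝⁿ : p₀ > 0} (n ≥ 1). For p ∈ M define the cosmological time τ_AGH(p) as the supremum of Lorentzian lengths L(c) = ∫₀¹ √(c₀'(s)² − ‖c̄'(s)‖²) ds over all C¹ curves c : [0,1] → ℝ × ℝⁿ with image contained in M, c(1) = p, that are future timelike, i.e. c₀'(s) > ‖c̄'(s)‖ for all s ∈ [0,1]. Then τ_AGH(p) = p₀ for every p ∈ M. -/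
/-!
A future causal curve gains at least as much time coordinate as Lorentzian length, since
`√(c₀'² − ‖c̄'‖²) ≤ c₀'`; integrating, the length of a curve ending at `p` is at most
`p₀ − c₀(0) < p₀`. Conversely the vertical segment of duration `t` ending at `p` stays in the
half-space and has length `t`, for every `0 < t < p₀`.
-/

open Set

theorem csSup_eq_of_Ioo_subset_of_subset_Iic {α : Type*} [ConditionallyCompleteLinearOrder α]
    [DenselyOrdered α] {S : Set α} {a b : α} (hab : a < b) (hIoo : Ioo a b ⊆ S)
    (hIic : S ⊆ Iic b) : sSup S = b := by
  have hS : S.Nonempty := (nonempty_Ioo.2 hab).mono hIoo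
  refine le_antisymm (csSup_le hS hIic) ?_
  calc b = sSup (Ioo a b) := (csSup_Ioo hab).symm
    _ ≤ sSup S := csSup_le_csSup ⟨b, hIic⟩ (nonempty_Ioo.2 hab) hIoo

namespace Minkowski

variable {E : Type*} [NormedAddCommGroup E]

noncomputable def lorentzianLength (c' : ℝ → ℝ × E) : ℝ :=
  ∫ s in (0 : ℝ)..1, √((c' s).1 ^ 2 - ‖(c' s).2‖ ^ 2)

lemma sqrt_sq_sub_sq_norm_le {v : ℝ × E} (hv : ‖v.2‖ ≤ v.1) : √(v.1 ^ 2 - ‖v.2‖ ^ 2) ≤ v.1 :=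
  Real.sqrt_le_iff.2 ⟨(norm_nonneg _).trans hv, by nlinarith [norm_nonneg v.2]⟩

lemma lorentzianLength_const (v : ℝ × E) :
    lorentzianLength (fun _ => v) = √(v.1 ^ 2 - ‖v.2‖ ^ 2) := by
  simp [lorentzianLength]

variable [NormedSpace ℝ E]

lemma lorentzianLength_le_sub_fst {c c' : ℝ → ℝ × E}
    (hc : ∀ s ∈ Icc (0 : ℝ) 1, HasDerivWithinAt c (c' s) (Icc 0 1) s)
    (hc' : ContinuousOn c' (Icc 0 1)) (hcausal : ∀ s ∈ Icc (0 : ℝ) 1, ‖(c' s).2‖ ≤ (c' s).1) :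
    lorentzianLength c' ≤ (c 1).1 - (c 0).1 := by
  have hfst : ∀ s ∈ Icc (0 : ℝ) 1,
      HasDerivWithinAt (fun s => (c s).1) (c' s).1 (Icc 0 1) s := fun s hs =>
    (ContinuousLinearMap.fst ℝ ℝ E).hasFDerivAt.comp_hasDerivWithinAt s (hc s hs)
  have hc'₁ : ContinuousOn (fun s => (c' s).1) (Icc 0 1) := continuous_fst.comp_continuousOn hc'
  have hspeed : ContinuousOn (fun s => √((c' s).1 ^ 2 - ‖(c' s).2‖ ^ 2)) (Icc 0 1) :=
    ((hc'₁.pow 2).sub ((continuous_snd.comp_continuousOn hc').norm.pow 2)).sqrt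
  have hftc : ∫ s in (0 : ℝ)..1, (c' s).1 = (c 1).1 - (c 0).1 :=
    intervalIntegral.integral_eq_sub_of_hasDerivAt_of_le zero_le_one
      (fun s hs => (hfst s hs).continuousWithinAt)
      (fun s hs => (hfst s (Ioo_subset_Icc_self hs)).hasDerivAt (Icc_mem_nhds hs.1 hs.2))
      (hc'₁.intervalIntegrable_of_Icc zero_le_one)
  rw [← hftc]
  exact intervalIntegral.integral_mono_on zero_le_one
    (hspeed.intervalIntegrable_of_Icc zero_le_one) (hc'₁.intervalIntegrable_of_Icc zero_le_one)
    fun s hs => sqrt_sq_sub_sq_norm_le (hcausal s hs)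

def timelikeLengths (p : ℝ × E) : Set ℝ :=
  {L : ℝ | ∃ c c' : ℝ → ℝ × E,
    (∀ s ∈ Icc (0 : ℝ) 1, HasDerivWithinAt c (c' s) (Icc (0 : ℝ) 1) s) ∧
    ContinuousOn c' (Icc (0 : ℝ) 1) ∧
    (∀ s ∈ Icc (0 : ℝ) 1, 0 < (c s).1) ∧
    c 1 = p ∧
    (∀ s ∈ Icc (0 : ℝ) 1, ‖(c' s).2‖ < (c' s).1) ∧
    L = lorentzianLength c'}

lemma timelikeLengths_subset_Iic (p : ℝ × E) : timelikeLengths p ⊆ Iic p.1 := by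
  rintro L ⟨c, c', hc, hc', hpos, rfl, htimelike, rfl⟩
  rw [mem_Iic]
  have hlen := lorentzianLength_le_sub_fst hc hc' fun s hs => (htimelike s hs).le
  linarith [hpos 0 (left_mem_Icc.2 zero_le_one)]

lemma Ioo_subset_timelikeLengths (p : ℝ × E) : Ioo 0 p.1 ⊆ timelikeLengths p := by
  intro t ⟨ht, htp⟩
  refine ⟨fun s => (p.1 - t + s * t, p.2), fun _ => (t, 0), fun s _ => ?_, continuousOn_const,
    fun s hs => ?_, by simp, fun _ _ => by simpa using ht, ?_⟩
  · refine HasDerivWithinAt.prodMk ?_ (hasDerivWithinAt_const _ _ _)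
    simpa using ((hasDerivAt_mul_const t).const_add (p.1 - t)).hasDerivWithinAt
  · nlinarith [hs.1]
  · simp [lorentzianLength_const, Real.sqrt_sq ht.le]

end Minkowski

open Minkowski in
theorem cosmologicalTime_upper_halfspace_general (n : ℕ)
    (p : ℝ × EuclideanSpace ℝ (Fin n)) (hp : 0 < p.1) :
    sSup {L : ℝ | ∃ c c' : ℝ → ℝ × EuclideanSpace ℝ (Fin n),
      (∀ s ∈ Set.Icc (0:ℝ) 1, HasDerivWithinAt c (c' s) (Set.Icc (0:ℝ) 1) s) ∧
      ContinuousOn c' (Set.Icc (0:ℝ) 1) ∧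
      (∀ s ∈ Set.Icc (0:ℝ) 1, 0 < (c s).1) ∧
      c 1 = p ∧
      (∀ s ∈ Set.Icc (0:ℝ) 1, ‖(c' s).2‖ < (c' s).1) ∧
      L = ∫ s in (0:ℝ)..1, Real.sqrt (((c' s).1) ^ 2 - ‖(c' s).2‖ ^ 2)} = p.1 :=
  csSup_eq_of_Ioo_subset_of_subset_Iic (S := timelikeLengths p) hp
    (Ioo_subset_timelikeLengths p) (timelikeLengths_subset_Iic p)

/-- Cosmological time of the Minkowski upper half-space.  For
`p ∈ M = {p₀ > 0} ⊆ ℝ × ℝⁿ` (n ≥ 1), the supremum of Lorentzian lengths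
`∫₀¹ √(c₀'(s)² − ‖c̄'(s)‖²) ds` over all C¹ future timelike curves `c : [0,1] → M`
ending at `p` equals `p₀`. -/
theorem cosmologicalTime_upper_halfspace (n : ℕ) (hn : 1 ≤ n)
    (p : ℝ × EuclideanSpace ℝ (Fin n)) (hp : 0 < p.1) :
    sSup {L : ℝ | ∃ c c' : ℝ → ℝ × EuclideanSpace ℝ (Fin n),
      (∀ s ∈ Set.Icc (0:ℝ) 1, HasDerivWithinAt c (c' s) (Set.Icc (0:ℝ) 1) s) ∧
      ContinuousOn c' (Set.Icc (0:ℝ) 1) ∧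
      (∀ s ∈ Set.Icc (0:ℝ) 1, 0 < (c s).1) ∧
      c 1 = p ∧
      (∀ s ∈ Set.Icc (0:ℝ) 1, ‖(c' s).2‖ < (c' s).1) ∧
      L = ∫ s in (0:ℝ)..1, Real.sqrt (((c' s).1) ^ 2 - ‖(c' s).2‖ ^ 2)} = p.1 :=
  cosmologicalTime_upper_halfspace_general n p hp
end
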